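/- arXiv:2205.04922 — 6 statements merged into one kernel-verified Lean document; each statement's English description precedes it below -/
import Mathlib

section
/- Let d ≥ 2, let σ denote the surface measure on the unit sphere S^{d−1} ⊂ ℝ^d, and for λ ∈ ℂ with Re λ > 0 and j ∈ {1,…,d} set γ_j(λ) = ∫_{S^{d−1}} p₁² p_j² / (λ + i p₁) dσ(p). Then for every ψ̄ ≥ 0 one has |1 + d ψ̄ γ_j(λ)| ≥ 1 for all λ with Re λ > 0. In particular, in the puller case (ι = +1) the Penrose condition 1 + ι d ψ̄ γ_j(λ) ≠ 0 holds for every concentration ψ̄ ≥ 0, with a uniform lower bound independent of ψ̄. -/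
open MeasureTheory Metric

/-!
Since `Re λ > 0`, each integrand `p₁² p_j² / (λ + i p₁)` has nonnegative real part, hence so
does `γ_j(λ)`. For `ψ̄ ≥ 0` the real part of `1 + d ψ̄ γ_j(λ)` is therefore at least `1`, which
bounds its modulus from below.
-/

lemma Complex.re_ofReal_div_nonneg {a : ℝ} {z : ℂ} (ha : 0 ≤ a) (hz : 0 ≤ z.re) :
    0 ≤ ((a : ℂ) / z).re := by
  rw [div_eq_mul_inv, Complex.re_ofReal_mul, Complex.inv_re]
  exact mul_nonneg ha (div_nonneg hz (Complex.normSq_nonneg z))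

lemma MeasureTheory.re_integral_nonneg {α : Type*} [MeasurableSpace α] {μ : Measure α}
    {f : α → ℂ} (hf : ∀ x, 0 ≤ (f x).re) : 0 ≤ (∫ x, f x ∂μ).re := by
  by_cases hint : Integrable f μ
  · exact (integral_re hint).le.trans' (integral_nonneg hf)
  · simp [integral_undef hint]

lemma Complex.one_le_norm_one_add_of_re_nonneg {z : ℂ} (hz : 0 ≤ z.re) : 1 ≤ ‖1 + z‖ :=
  calc (1 : ℝ) ≤ (1 + z).re := by simpa using hz
    _ ≤ ‖1 + z‖ := Complex.re_le_norm _

/-- With `γ_j(λ) = ∫_{S^{d-1}} p₁² p_j² / (λ + i p₁) dσ(p)` for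
`Re λ > 0`, one has `|1 + d ψ̄ γ_j(λ)| ≥ 1` for every concentration `ψ̄ ≥ 0`; in
particular, in the puller case the Penrose symbol `1 + d ψ̄ γ_j(λ)` never vanishes
on the open right half-plane, with a lower bound uniform in `ψ̄`. -/
theorem statement1 (d : ℕ) (hd : 2 ≤ d) (l : ℂ) (hl : 0 < l.re) (j : Fin d)
    (ψ : ℝ) (hψ : 0 ≤ ψ) :
    letI E := EuclideanSpace ℝ (Fin d)
    letI σ : Measure (sphere (0 : E) 1) := (volume : Measure E).toSphere
    letI i0 : Fin d := ⟨0, by omega⟩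
    letI γ : ℂ := ∫ p : sphere (0 : E) 1,
      ((((p : E) i0) ^ 2 * ((p : E) j) ^ 2 : ℝ) : ℂ) / (l + Complex.I * ((p : E) i0)) ∂σ
    1 ≤ ‖1 + (d : ℂ) * (ψ : ℂ) * γ‖ ∧ 1 + (d : ℂ) * (ψ : ℂ) * γ ≠ 0 := by
  have of_re_nonneg : ∀ w : ℂ, 0 ≤ w.re →
      1 ≤ ‖1 + (d : ℂ) * (ψ : ℂ) * w‖ ∧ 1 + (d : ℂ) * (ψ : ℂ) * w ≠ 0 := by
    intro w hw
    have hnorm : 1 ≤ ‖1 + (d : ℂ) * (ψ : ℂ) * w‖ :=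
      Complex.one_le_norm_one_add_of_re_nonneg <| by
        simpa [Complex.mul_re] using mul_nonneg (mul_nonneg d.cast_nonneg hψ) hw
    exact ⟨hnorm, fun h => by norm_num [h] at hnorm⟩
  exact of_re_nonneg _ <| re_integral_nonneg fun p =>
    Complex.re_ofReal_div_nonneg (by positivity) (by simpa using hl.le)
end

section
/- There exists a constant C > 0 such that for every t ∈ ℝ, |∫_{−1}^{1} s² (1 − s²) e^{−i s t} ds| ≤ C (1 + |t|)^{−2}. -/
/-!
Integrate by parts twice against `e^{-ist} = ∂ₛ(e^{-ist}) / (-it)`. Since the amplitude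
`s²(1 - s²)` vanishes at `s = ±1`, the first integration produces no boundary term, and the
second leaves boundary terms and an integral that are all bounded, so the integral is
`O(t⁻²)`. For `|t| ≤ 1` the trivial bound suffices.
-/

open Complex Set intervalIntegral

section IntegrationByParts

variable {f f' f'' : ℝ → ℂ} {a b : ℝ} {α : ℂ}

theorem integral_mul_cexp_eq_sub_div (hα : α ≠ 0) (hf : ∀ x ∈ uIcc a b, HasDerivAt f (f' x) x)
    (hf' : IntervalIntegrable f' MeasureTheory.volume a b) :
    ∫ x in a..b, f x * cexp (α * x) =
      (f b * cexp (α * b) - f a * cexp (α * a) - ∫ x in a..b, f' x * cexp (α * x)) / α := by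
  have hexp : ∀ x ∈ uIcc a b, HasDerivAt (fun y : ℝ ↦ cexp (α * y) / α) (cexp (α * x)) x := by
    intro x _
    simpa [hα] using (((hasDerivAt_id (x : ℂ)).const_mul α).cexp.div_const α).comp_ofReal
  rw [integral_mul_deriv_eq_deriv_mul hf hexp hf'
    ((by fun_prop : Continuous fun x : ℝ ↦ cexp (α * x)).intervalIntegrable _ _)]
  simp only [← mul_div_assoc, integral_div, sub_div]

theorem integral_mul_cexp_eq_div_sq_of_eq_zero (hα : α ≠ 0) (ha : f a = 0) (hb : f b = 0)
    (hf : ∀ x ∈ uIcc a b, HasDerivAt f (f' x) x) (hf' : ∀ x ∈ uIcc a b, HasDerivAt f' (f'' x) x)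
    (hf'' : IntervalIntegrable f'' MeasureTheory.volume a b) :
    ∫ x in a..b, f x * cexp (α * x) =
      (f' a * cexp (α * a) - f' b * cexp (α * b) + ∫ x in a..b, f'' x * cexp (α * x)) / α ^ 2 := by
  have hf'_int : IntervalIntegrable f' MeasureTheory.volume a b :=
    (HasDerivAt.continuousOn hf').intervalIntegrable
  rw [integral_mul_cexp_eq_sub_div hα hf hf'_int, integral_mul_cexp_eq_sub_div hα hf' hf'', ha, hb]
  field_simp
  ring

theorem norm_cexp_neg_I_mul_mul (x t : ℝ) : ‖cexp (-I * x * t)‖ = 1 := by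
  rw [show -I * x * t = ((-(x * t) : ℝ) : ℂ) * I by push_cast; ring, norm_exp_ofReal_mul_I]

theorem norm_integral_mul_cexp_le {M : ℝ} (hab : a ≤ b) (hM : ∀ x ∈ uIoc a b, ‖f x‖ ≤ M)
    (t : ℝ) : ‖∫ x in a..b, f x * cexp (-I * x * t)‖ ≤ M * (b - a) := by
  rw [← abs_of_nonneg (sub_nonneg.2 hab)]
  refine norm_integral_le_of_norm_le_const fun x hx ↦ ?_
  rw [norm_mul, norm_cexp_neg_I_mul_mul, mul_one]
  exact hM x hx

theorem sq_mul_norm_integral_mul_cexp_le {M : ℝ} (hab : a ≤ b) (ha : f a = 0) (hb : f b = 0)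
    (hf : ∀ x ∈ uIcc a b, HasDerivAt f (f' x) x) (hf' : ∀ x ∈ uIcc a b, HasDerivAt f' (f'' x) x)
    (hf'' : IntervalIntegrable f'' MeasureTheory.volume a b)
    (hM : ∀ x ∈ uIoc a b, ‖f'' x‖ ≤ M) {t : ℝ} (ht : t ≠ 0) :
    t ^ 2 * ‖∫ x in a..b, f x * cexp (-I * x * t)‖ ≤ ‖f' a‖ + ‖f' b‖ + M * (b - a) := by
  have hα : -I * t ≠ 0 := by simp [ht]
  have hphase : ∀ x : ℝ, -I * x * t = -I * t * x := fun x ↦ by ring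
  simp only [hphase]
  rw [integral_mul_cexp_eq_div_sq_of_eq_zero hα ha hb hf hf' hf'', norm_div, norm_pow,
    show ‖-I * t‖ ^ 2 = t ^ 2 by simp, mul_div_cancel₀ _ (pow_ne_zero 2 ht)]
  simp only [← hphase]
  calc _ ≤ ‖f' a * cexp (-I * a * t)‖ + ‖f' b * cexp (-I * b * t)‖
          + ‖∫ x in a..b, f'' x * cexp (-I * x * t)‖ :=
        (norm_add_le _ _).trans (add_le_add_left (norm_sub_le _ _) _)
    _ ≤ _ := by
      simp only [norm_mul, norm_cexp_neg_I_mul_mul, mul_one]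
      gcongr
      exact norm_integral_mul_cexp_le hab hM t

end IntegrationByParts

theorem le_mul_one_add_abs_rpow_neg_two {x A t : ℝ} (hx0 : 0 ≤ x) (hx : x ≤ A)
    (hxt : t ≠ 0 → t ^ 2 * x ≤ A) : x ≤ 4 * A * (1 + |t|) ^ (-2 : ℝ) := by
  have hpos : 0 < 1 + |t| := by positivity
  rw [show (-2 : ℝ) = -((2 : ℕ) : ℝ) by norm_num, Real.rpow_neg hpos.le, Real.rpow_natCast,
    ← div_eq_mul_inv, le_div_iff₀ (by positivity)]
  rcases le_or_gt |t| 1 with ht | ht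
  · have h4 : (1 + |t|) ^ 2 ≤ 4 := by nlinarith [abs_nonneg t]
    nlinarith [mul_le_mul_of_nonneg_left h4 hx0]
  · have h4 : (1 + |t|) ^ 2 ≤ 4 * t ^ 2 := by nlinarith [sq_abs t]
    nlinarith [mul_le_mul_of_nonneg_left h4 hx0, hxt (abs_pos.1 (by linarith))]

theorem hasDerivAt_ofReal_sq_mul_one_sub_sq (x : ℝ) :
    HasDerivAt (fun s : ℝ ↦ ((s ^ 2 * (1 - s ^ 2) : ℝ) : ℂ)) ((2 * x - 4 * x ^ 3 : ℝ) : ℂ) x :=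
  HasDerivAt.ofReal_comp <|
    ((hasDerivAt_pow 2 x).mul ((hasDerivAt_pow 2 x).const_sub 1)).congr_deriv (by ring)

theorem hasDerivAt_ofReal_two_mul_sub_four_mul_cube (x : ℝ) :
    HasDerivAt (fun s : ℝ ↦ ((2 * s - 4 * s ^ 3 : ℝ) : ℂ)) ((2 - 12 * x ^ 2 : ℝ) : ℂ) x :=
  HasDerivAt.ofReal_comp <|
    (((hasDerivAt_id x).const_mul 2).sub ((hasDerivAt_pow 3 x).const_mul 4)).congr_deriv
      (by norm_num; ring)

theorem norm_ofReal_sq_mul_one_sub_sq_le_one {s : ℝ} (hs : s ^ 2 ≤ 1) :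
    ‖((s ^ 2 * (1 - s ^ 2) : ℝ) : ℂ)‖ ≤ 1 := by
  rw [Complex.norm_real, Real.norm_eq_abs, abs_le]
  constructor <;> nlinarith [sq_nonneg s]

theorem norm_ofReal_two_sub_twelve_mul_sq_le_ten {s : ℝ} (hs : s ^ 2 ≤ 1) :
    ‖((2 - 12 * s ^ 2 : ℝ) : ℂ)‖ ≤ 10 := by
  rw [Complex.norm_real, Real.norm_eq_abs, abs_le]
  constructor <;> nlinarith [sq_nonneg s]

/-- Improved stationary-phase decay of the one-dimensional
oscillatory integral `∫_{-1}^{1} s²(1-s²) e^{-ist} ds`: it is bounded by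
`C (1+|t|)^{-2}`. -/
theorem statement4 :
    ∃ C : ℝ, 0 < C ∧ ∀ t : ℝ,
      ‖(∫ s in (-1 : ℝ)..1,
          ((s ^ 2 * (1 - s ^ 2) : ℝ) : ℂ) * Complex.exp (-Complex.I * s * t))‖ ≤
        C * (1 + |t|) ^ (-2 : ℝ) := by
  refine ⟨96, by norm_num, fun t ↦ ?_⟩
  have hsq : ∀ s ∈ uIoc (-1 : ℝ) 1, s ^ 2 ≤ 1 := fun s hs ↦ by
    rw [uIoc_of_le (by norm_num)] at hs
    nlinarith [hs.1, hs.2]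
  have htrivial := norm_integral_mul_cexp_le (by norm_num)
    (fun s hs ↦ norm_ofReal_sq_mul_one_sub_sq_le_one (hsq s hs)) t
  have hdecay := fun ht : t ≠ 0 ↦ sq_mul_norm_integral_mul_cexp_le (by norm_num)
    (by norm_num) (by norm_num) (fun x _ ↦ hasDerivAt_ofReal_sq_mul_one_sub_sq x)
    (fun x _ ↦ hasDerivAt_ofReal_two_mul_sub_four_mul_cube x)
    ((by fun_prop : Continuous fun s : ℝ ↦ ((2 - 12 * s ^ 2 : ℝ) : ℂ)).intervalIntegrable _ _)
    (fun s hs ↦ norm_ofReal_two_sub_twelve_mul_sq_le_ten (hsq s hs)) ht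
  refine (le_mul_one_add_abs_rpow_neg_two (A := 24) (norm_nonneg _)
    (htrivial.trans (by norm_num)) fun ht ↦ (hdecay ht).trans (by norm_num)).trans_eq
    (by norm_num)
end

section
/- There exists a constant C > 0 such that for every t ∈ ℝ, |∫₀^{2π} cos²θ sin²θ e^{−i t cos θ} dθ| ≤ C (1 + |t|)^{−3/2}. -/
open Real intervalIntegral

/-!
Substituting `u = cos θ` on each half period turns the kernel into
`2 ∫_{-1}^{1} u² √(1 - u²) e^{-itu} du`; the stationary points `θ = 0, π` become the endpoints
`u = ±1`, where the amplitude vanishes like `√(1 - u²)`. On the two end intervals where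
`1 - u² ≤ 1/|t|`, of length at most `1/|t|`, the amplitude is `O(|t|^{-1/2})`, so they contribute
`O(|t|^{-3/2})`. On the remaining interval two integrations by parts against `e^{-itu}` give the
same bound, because the `k`-th derivative of the amplitude is `O((1 - u²)^{1/2 - k})`.
-/

section Oscillatory

open Complex

theorem norm_exp_neg_I_mul_ofReal_mul (t x : ℝ) : ‖exp (-I * t * x)‖ = 1 := by
  rw [show -I * t * x = ((-(t * x) : ℝ) : ℂ) * I by push_cast; ring, norm_exp_ofReal_mul_I]

theorem norm_integral_mul_exp_le {f f' : ℝ → ℂ} {a b t : ℝ} (ht : t ≠ 0)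
    (hf : ∀ x ∈ Set.uIcc a b, HasDerivAt f (f' x) x)
    (hf' : IntervalIntegrable f' MeasureTheory.volume a b) :
    ‖∫ x in a..b, f x * exp (-I * t * x)‖ ≤
      (‖f a‖ + ‖f b‖ + ‖∫ x in a..b, f' x * exp (-I * t * x)‖) / |t| := by
  set c : ℂ := (-I * t)⁻¹
  have hc : ‖c‖ = |t|⁻¹ := by simp [c]
  have hv (x : ℝ) : HasDerivAt (fun y : ℝ => c * exp (-I * t * y)) (exp (-I * t * x)) x := by
    have := (((hasDerivAt_id (x : ℂ)).const_mul (-I * t)).cexp.const_mul c).comp_ofReal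
    refine this.congr_deriv ?_
    rw [id, mul_one, mul_left_comm, inv_mul_cancel₀ (by simp [ht]), mul_one]
  rw [integral_mul_deriv_eq_deriv_mul hf (fun x _ => hv x) hf'
    ((by fun_prop : Continuous fun x : ℝ => exp (-I * t * x)).intervalIntegrable _ _)]
  simp only [mul_left_comm _ c, integral_const_mul]
  calc _ ≤ ‖c * (f b * exp (-I * t * b))‖ + ‖c * (f a * exp (-I * t * a))‖
        + ‖c * ∫ x in a..b, f' x * exp (-I * t * x)‖ :=
      (norm_sub_le _ _).trans (add_le_add_left (norm_sub_le _ _) _)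
    _ = _ := by simp only [norm_mul, norm_exp_neg_I_mul_ofReal_mul, hc]; ring

end Oscillatory

theorem integral_abs_sin_smul_comp_cos {E : Type*} [NormedAddCommGroup E] [NormedSpace ℝ E]
    {G : ℝ → E} (hG : Continuous G) :
    ∫ θ in 0..2 * π, |sin θ| • G (cos θ) = (2 : ℝ) • ∫ u in -1..1, G u := by
  have hF : Continuous fun θ => |sin θ| • G (cos θ) := by fun_prop
  have h_half : ∫ θ in 0..π, |sin θ| • G (cos θ) = ∫ u in -1..1, G u := by
    calc ∫ θ in 0..π, |sin θ| • G (cos θ) = -∫ θ in 0..π, (-sin θ) • (G ∘ cos) θ := by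
          rw [← integral_neg]
          refine integral_congr fun θ hθ => ?_
          rw [Set.uIcc_of_le pi_pos.le] at hθ
          simp [abs_of_nonneg (sin_nonneg_of_nonneg_of_le_pi hθ.1 hθ.2)]
      _ = ∫ u in -1..1, G u := by
          rw [integral_deriv_smul_comp (fun θ _ => hasDerivAt_cos θ) (by fun_prop) hG,
            cos_zero, cos_pi, integral_symm, neg_neg]
  have h_refl : ∫ θ in π..2 * π, |sin θ| • G (cos θ) = ∫ θ in 0..π, |sin θ| • G (cos θ) := by
    have := integral_comp_sub_left (fun θ => |sin θ| • G (cos θ)) (a := 0) (b := π) (2 * π)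
    rw [sub_zero, two_mul, add_sub_cancel_right] at this
    simp only [sin_two_pi_sub, cos_two_pi_sub, abs_neg, ← two_mul] at this
    exact this.symm
  rw [← integral_add_adjacent_intervals (b := π) (hF.intervalIntegrable _ _)
    (hF.intervalIntegrable _ _), h_refl, h_half, two_smul]

theorem exists_le_mul_one_add_abs_rpow {F : ℝ → ℝ} {M K q : ℝ} (hq : q ≤ 0)
    (hM : ∀ t, F t ≤ M) (hK : ∀ t, 1 ≤ |t| → F t ≤ K * |t| ^ q) :
    ∃ C, 0 < C ∧ ∀ t, F t ≤ C * (1 + |t|) ^ q := by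
  set A := max (max M K) 1
  have hA : 0 < A := lt_max_of_lt_right one_pos
  have h2 : (2 : ℝ) ^ (-q) * 2 ^ q = 1 := by
    rw [← rpow_add two_pos, neg_add_cancel, rpow_zero]
  refine ⟨A * 2 ^ (-q), by positivity, fun t => ?_⟩
  rcases le_total |t| 1 with ht | ht
  · calc F t ≤ A * (2 ^ (-q) * 2 ^ q) := by rw [h2, mul_one]; exact (hM t).trans (by simp [A])
      _ ≤ A * 2 ^ (-q) * (1 + |t|) ^ q := by
        rw [← mul_assoc]
        exact mul_le_mul_of_nonneg_left
          (rpow_le_rpow_of_nonpos (by positivity) (by linarith) hq) (by positivity)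
  · calc F t ≤ A * (2 ^ (-q) * (2 ^ q * |t| ^ q)) := by
          rw [← mul_assoc (2 ^ (-q)), h2, one_mul]
          exact (hK t ht).trans (by gcongr; simp [A])
      _ ≤ A * 2 ^ (-q) * (1 + |t|) ^ q := by
        rw [← mul_rpow zero_le_two (abs_nonneg t), ← mul_assoc]
        exact mul_le_mul_of_nonneg_left
          (rpow_le_rpow_of_nonpos (by positivity) (by linarith) hq) (by positivity)

theorem rpow_neg_three_halves {x : ℝ} (hx : 0 < x) : x ^ (-(3 : ℝ) / 2) = x⁻¹ * √x⁻¹ := by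
  rw [show -(3 : ℝ) / 2 = -1 + -(1 / 2) by norm_num, rpow_add hx, rpow_neg_one,
    rpow_neg hx.le, ← sqrt_eq_rpow, sqrt_inv]

/-- `amp (cos θ) * |sin θ| = cos² θ sin² θ`; `amp'` and `amp''` are its derivatives only on
`(-1, 1)`. -/
noncomputable def amp (u : ℝ) : ℝ := u ^ 2 * √(1 - u ^ 2)

noncomputable def amp' (u : ℝ) : ℝ := (2 * u - 3 * u ^ 3) / √(1 - u ^ 2)

noncomputable def amp'' (u : ℝ) : ℝ :=
  (2 - 9 * u ^ 2 + 6 * u ^ 4) / ((1 - u ^ 2) * √(1 - u ^ 2))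

section Amplitude

variable {u : ℝ}

theorem hasDerivAt_sqrt_one_sub_sq (hu : u ^ 2 < 1) :
    HasDerivAt (fun u => √(1 - u ^ 2)) (-u / √(1 - u ^ 2)) u := by
  refine (((hasDerivAt_pow 2 u).const_sub 1).sqrt (by linarith)).congr_deriv ?_
  field_simp
  ring

theorem hasDerivAt_amp (hu : u ^ 2 < 1) : HasDerivAt amp (amp' u) u := by
  have hs : 0 < √(1 - u ^ 2) := sqrt_pos.2 (by linarith)
  have hsq : √(1 - u ^ 2) ^ 2 = 1 - u ^ 2 := sq_sqrt (by linarith)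
  refine ((hasDerivAt_pow 2 u).mul (hasDerivAt_sqrt_one_sub_sq hu)).congr_deriv ?_
  unfold amp'
  field_simp
  linear_combination (2 * u) * hsq

theorem hasDerivAt_amp' (hu : u ^ 2 < 1) : HasDerivAt amp' (amp'' u) u := by
  have hs : 0 < √(1 - u ^ 2) := sqrt_pos.2 (by linarith)
  have hsq : √(1 - u ^ 2) ^ 2 = 1 - u ^ 2 := sq_sqrt (by linarith)
  have h1 : 1 - u ^ 2 ≠ 0 := by linarith
  have hnum : HasDerivAt (fun u : ℝ => 2 * u - 3 * u ^ 3) (2 - 9 * u ^ 2) u := by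
    refine (((hasDerivAt_id u).const_mul 2).sub ((hasDerivAt_pow 3 u).const_mul 3)).congr_deriv ?_
    simp only [mul_one]
    ring
  refine (hnum.div (hasDerivAt_sqrt_one_sub_sq hu) hs.ne').congr_deriv ?_
  unfold amp''
  field_simp
  rw [hsq]
  ring

theorem hasDerivAt_div_sqrt_one_sub_sq (hu : u ^ 2 < 1) :
    HasDerivAt (fun u => u / √(1 - u ^ 2)) (1 / ((1 - u ^ 2) * √(1 - u ^ 2))) u := by
  have hs : 0 < √(1 - u ^ 2) := sqrt_pos.2 (by linarith)
  have h1 : 1 - u ^ 2 ≠ 0 := by linarith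
  refine ((hasDerivAt_id u).div (hasDerivAt_sqrt_one_sub_sq hu) hs.ne').congr_deriv ?_
  field_simp
  rw [id, sq_sqrt (by linarith)]
  ring

theorem abs_amp_le (hu : u ^ 2 ≤ 1) : |amp u| ≤ √(1 - u ^ 2) := by
  rw [amp, abs_mul, abs_of_nonneg (sqrt_nonneg _), abs_pow, sq_abs]
  exact mul_le_of_le_one_left (sqrt_nonneg _) hu

theorem abs_amp'_le (hu : u ^ 2 < 1) : |amp' u| ≤ 1 / √(1 - u ^ 2) := by
  rw [amp', abs_div, abs_of_nonneg (sqrt_nonneg _)]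
  gcongr
  rw [abs_le]
  constructor <;> nlinarith [sq_nonneg u, sq_nonneg (3 * u ^ 2 - 1), sq_nonneg (3 * u + 1)]

theorem abs_amp''_le (hu : u ^ 2 < 1) : |amp'' u| ≤ 2 / ((1 - u ^ 2) * √(1 - u ^ 2)) := by
  have hD : 0 ≤ (1 - u ^ 2) * √(1 - u ^ 2) := mul_nonneg (by linarith) (sqrt_nonneg _)
  rw [amp'', abs_div, abs_of_nonneg hD]
  refine div_le_div_of_nonneg_right (abs_le.2 ⟨?_, ?_⟩) hD <;>
    nlinarith [sq_nonneg u, sq_nonneg (u ^ 2 - 3 / 4)]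

end Amplitude

section Interval

variable {s : Set ℝ}

theorem continuousOn_div_one_sub_sq_mul_sqrt {p : ℝ → ℝ} (hp : Continuous p)
    (hs : ∀ u ∈ s, u ^ 2 < 1) : ContinuousOn (fun u => p u / ((1 - u ^ 2) * √(1 - u ^ 2))) s :=
  hp.continuousOn.div (by fun_prop) fun u hu =>
    (mul_pos (by linarith [hs u hu]) (sqrt_pos.2 (by linarith [hs u hu]))).ne'

theorem continuousOn_amp' (hs : ∀ u ∈ s, u ^ 2 < 1) : ContinuousOn amp' s := fun u hu =>
  (hasDerivAt_amp' (hs u hu)).continuousAt.continuousWithinAt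

theorem continuousOn_amp'' (hs : ∀ u ∈ s, u ^ 2 < 1) : ContinuousOn amp'' s :=
  continuousOn_div_one_sub_sq_mul_sqrt (p := fun u => 2 - 9 * u ^ 2 + 6 * u ^ 4) (by fun_prop) hs

theorem sq_lt_one_of_mem_uIcc_neg {b u : ℝ} (hb₀ : 0 ≤ b) (hb₁ : b < 1)
    (hu : u ∈ Set.uIcc (-b) b) : u ^ 2 < 1 := by
  rw [Set.uIcc_of_le (by linarith)] at hu
  nlinarith [hu.1, hu.2]

end Interval

section Estimates

open Complex

variable {b t : ℝ}

theorem norm_integral_amp_mul_exp_le_of_sq_mem_Icc {a c : ℝ}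
    (h : ∀ u ∈ Set.uIoc a c, u ^ 2 ∈ Set.Icc (b ^ 2) 1) :
    ‖∫ u in a..c, (amp u : ℂ) * exp (-I * t * u)‖ ≤ √(1 - b ^ 2) * |c - a| := by
  refine norm_integral_le_of_norm_le_const fun u hu => ?_
  rw [norm_mul, norm_exp_neg_I_mul_ofReal_mul, mul_one, norm_real, norm_eq_abs]
  exact (abs_amp_le (h u hu).2).trans (sqrt_le_sqrt (by linarith [(h u hu).1]))

theorem norm_integral_amp''_mul_exp_le (hb₀ : 0 ≤ b) (hb₁ : b < 1) :
    ‖∫ u in -b..b, (amp'' u : ℂ) * exp (-I * t * u)‖ ≤ 4 / √(1 - b ^ 2) := by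
  have hmem := fun u => sq_lt_one_of_mem_uIcc_neg (u := u) hb₀ hb₁
  have hmajor := continuousOn_div_one_sub_sq_mul_sqrt (p := fun _ => 2) continuous_const hmem
  calc _ ≤ ∫ u in -b..b, ‖(amp'' u : ℂ) * exp (-I * t * u)‖ :=
        norm_integral_le_integral_norm (by linarith)
    _ ≤ ∫ u in -b..b, 2 / ((1 - u ^ 2) * √(1 - u ^ 2)) := by
        refine integral_mono_on (by linarith) ?_ hmajor.intervalIntegrable fun u hu => ?_
        · exact ((continuous_ofReal.comp_continuousOn (continuousOn_amp'' hmem)).mul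
            (by fun_prop : Continuous fun u : ℝ => exp (-I * t * u)).continuousOn).norm
            |>.intervalIntegrable
        · rw [norm_mul, norm_exp_neg_I_mul_ofReal_mul, mul_one, norm_real, norm_eq_abs]
          exact abs_amp''_le (hmem u (Set.Icc_subset_uIcc hu))
    _ = 4 * b / √(1 - b ^ 2) := by
        rw [integral_eq_sub_of_hasDerivAt (f := fun u => 2 * (u / √(1 - u ^ 2)))
          (fun u hu => ((hasDerivAt_div_sqrt_one_sub_sq (hmem u hu)).const_mul 2).congr_deriv
            (by ring)) hmajor.intervalIntegrable]
        simp only [neg_sq]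
        ring
    _ ≤ 4 / √(1 - b ^ 2) := by gcongr; linarith

theorem norm_integral_amp_mul_exp_le_of_lt_one (hb₀ : 0 ≤ b) (hb₁ : b < 1) (ht : t ≠ 0) :
    ‖∫ u in -b..b, (amp u : ℂ) * exp (-I * t * u)‖ ≤
      (2 * √(1 - b ^ 2) + 6 / (√(1 - b ^ 2) * |t|)) / |t| := by
  have hmem := fun u => sq_lt_one_of_mem_uIcc_neg (u := u) hb₀ hb₁
  have hb := hmem b Set.right_mem_uIcc
  have hb' := hmem (-b) Set.left_mem_uIcc
  have h_amp := norm_integral_mul_exp_le ht (fun u hu => (hasDerivAt_amp (hmem u hu)).ofReal_comp)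
    (continuous_ofReal.comp_continuousOn (continuousOn_amp' hmem)).intervalIntegrable
  have h_amp' := norm_integral_mul_exp_le ht
    (fun u hu => (hasDerivAt_amp' (hmem u hu)).ofReal_comp)
    (continuous_ofReal.comp_continuousOn (continuousOn_amp'' hmem)).intervalIntegrable
  simp only [norm_real, norm_eq_abs] at h_amp h_amp'
  have hs : 0 < √(1 - b ^ 2) := sqrt_pos.2 (by linarith)
  calc _ ≤ (√(1 - b ^ 2) + √(1 - b ^ 2)
        + (1 / √(1 - b ^ 2) + 1 / √(1 - b ^ 2) + 4 / √(1 - b ^ 2)) / |t|) / |t| := by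
        refine h_amp.trans ?_
        gcongr
        · simpa using abs_amp_le hb'.le
        · exact abs_amp_le hb.le
        refine h_amp'.trans ?_
        gcongr
        · simpa using abs_amp'_le hb'
        · exact abs_amp'_le hb
        · exact norm_integral_amp''_mul_exp_le hb₀ hb₁
    _ = _ := by field_simp; ring

theorem norm_integral_amp_mul_exp_le (ht : 1 ≤ |t|) :
    ‖∫ u in -1..1, (amp u : ℂ) * exp (-I * t * u)‖ ≤ 10 * |t| ^ (-(3 : ℝ) / 2) := by
  set s := |t|⁻¹
  have hs₀ : 0 < s := by positivity
  have hs₁ : s ≤ 1 := inv_le_one_of_one_le₀ ht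
  -- `1 - b² = 1/|t|` balances the end intervals against the integration by parts terms
  set b := √(1 - s)
  have hb₀ : 0 ≤ b := sqrt_nonneg _
  have hb_sq : 1 - b ^ 2 = s := by rw [sq_sqrt (by linarith)]; ring
  have hb₁ : b < 1 := (sqrt_lt' one_pos).2 (by linarith)
  have hf (a c : ℝ) : IntervalIntegrable (fun u : ℝ => (amp u : ℂ) * exp (-I * t * u))
      MeasureTheory.volume a c := by
    refine Continuous.intervalIntegrable ?_ a c
    unfold amp; fun_prop
  have h_left := norm_integral_amp_mul_exp_le_of_sq_mem_Icc (a := -1) (c := -b) (b := b) (t := t)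
    fun u hu => by
      rw [Set.uIoc_of_le (by linarith)] at hu
      constructor <;> nlinarith [hu.1, hu.2]
  have h_right := norm_integral_amp_mul_exp_le_of_sq_mem_Icc (a := b) (c := 1) (b := b) (t := t)
    fun u hu => by
      rw [Set.uIoc_of_le hb₁.le] at hu
      constructor <;> nlinarith [hu.1, hu.2]
  have h_mid := norm_integral_amp_mul_exp_le_of_lt_one hb₀ hb₁ (t := t) (abs_pos.1 (by linarith))
  rw [← integral_add_adjacent_intervals (hf (-1) b) (hf b 1),
    ← integral_add_adjacent_intervals (hf (-1) (-b)) (hf (-b) b),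
    rpow_neg_three_halves (by linarith)]
  have h_gap : 1 - b ≤ s := by nlinarith
  rw [hb_sq, show |t| = s⁻¹ from (inv_inv _).symm] at h_mid
  rw [hb_sq, abs_of_nonneg (by linarith)] at h_left h_right
  have hs : 0 < √s := sqrt_pos.2 hs₀
  calc _ ≤ √s * s + (2 * √s + 6 / (√s * s⁻¹)) / s⁻¹ + √s * s := by
        refine norm_add₃_le.trans (add_le_add_three ?_ h_mid ?_)
        · exact h_left.trans (by gcongr; linarith)
        · exact h_right.trans (by gcongr)
    _ = 10 * (s * √s) := by
        field_simp
        rw [sq_sqrt hs₀.le]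
        ring

theorem integral_cos_sq_mul_sin_sq_mul_exp (t : ℝ) :
    ∫ θ in (0 : ℝ)..(2 * π), ((Real.cos θ ^ 2 * Real.sin θ ^ 2 : ℝ) : ℂ) *
      exp (-I * t * Real.cos θ) = 2 * ∫ u in -1..1, (amp u : ℂ) * exp (-I * t * u) := by
  have hG : Continuous fun u : ℝ => (amp u : ℂ) * exp (-I * t * u) := by unfold amp; fun_prop
  have h_integrand (θ : ℝ) : ((Real.cos θ ^ 2 * Real.sin θ ^ 2 : ℝ) : ℂ) *
      exp (-I * t * Real.cos θ) =
      |Real.sin θ| • ((amp (Real.cos θ) : ℂ) * exp (-I * t * Real.cos θ)) := by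
    rw [amp, ← Real.sin_sq, sqrt_sq_eq_abs, real_smul, ← mul_assoc, ← ofReal_mul,
      show |Real.sin θ| * (Real.cos θ ^ 2 * |Real.sin θ|) = Real.cos θ ^ 2 * Real.sin θ ^ 2 by
        rw [← sq_abs (Real.sin θ)]; ring]
  simp_rw [h_integrand]
  rw [integral_abs_sin_smul_comp_cos hG, real_smul, ofReal_ofNat]

end Estimates

/-- Improved stationary-phase decay of the two-dimensional
Volterra kernel `∫₀^{2π} cos²θ sin²θ e^{-it cos θ} dθ`: it is bounded by
`C (1+|t|)^{-3/2}`. -/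
theorem statement6 :
    ∃ C : ℝ, 0 < C ∧ ∀ t : ℝ,
      ‖∫ θ in (0 : ℝ)..(2 * π),
          ((Real.cos θ ^ 2 * Real.sin θ ^ 2 : ℝ) : ℂ) *
            Complex.exp (-Complex.I * t * Real.cos θ)‖ ≤
        C * (1 + |t|) ^ (-(3 : ℝ) / 2) := by
  refine exists_le_mul_one_add_abs_rpow (M := 4) (K := 20) (by norm_num) (fun t => ?_)
    (fun t ht => ?_) <;> rw [integral_cos_sq_mul_sin_sq_mul_exp, norm_mul, Complex.norm_two]
  · calc _ ≤ 2 * (√(1 - 0 ^ 2) * |1 - -1|) := by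
          gcongr
          refine norm_integral_amp_mul_exp_le_of_sq_mem_Icc fun u hu => ⟨by simp [sq_nonneg], ?_⟩
          rw [Set.uIoc_of_le (by norm_num)] at hu
          nlinarith [hu.1, hu.2]
      _ = 4 := by norm_num
  · linarith [norm_integral_amp_mul_exp_le ht]
end

section
/- There exists a constant C > 0 such that for every 2π-periodic, three times continuously differentiable function g : ℝ → ℂ with g(0) = g(π) = 0, and every t ∈ ℝ, |∫₀^{2π} e^{−i t cos θ} g(θ) dθ| ≤ C (1 + |t|)^{−3/2} Σ_{m=0}^{3} sup_θ |g^{(m)}(θ)|. -/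
/-
Reflecting θ ↦ -θ folds the integral onto [0, π] with amplitude G(θ) = g(θ) + g(-θ). Periodicity
and g(0) = g(π) = 0 make G vanish to second order at both stationary points, so that
|G| ≲ sin² θ and |G'| ≲ sin θ. On [δ, π - δ], with δ = |t|^(-1/2), integrate by parts twice
against e^{-it cos θ}, whose derivative is it sin θ e^{-it cos θ}; each step gains a factor
1/(|t| sin θ) and the result is O(δ³). On the two end intervals the integrand is O(δ²) over a
length δ. Altogether the integral is O(|t|^(-3/2)), and for |t| ≤ 1 the trivial bound suffices.
-/

open Real Set intervalIntegral MeasureTheory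

lemma le_two_mul_sin {x : ℝ} (h0 : 0 ≤ x) (h1 : x ≤ π / 2) : x ≤ 2 * sin x := by
  have : x / 2 ≤ 2 / π * x := by
    rw [div_mul_eq_mul_div, div_le_div_iff₀ two_pos Real.pi_pos]
    nlinarith [Real.pi_le_four]
  linarith [Real.mul_le_sin h0 h1]

lemma integral_inv_sin_sq {a b : ℝ} (hsin : ∀ x ∈ uIcc a b, sin x ≠ 0) :
    ∫ x in a..b, (sin x ^ 2)⁻¹ = cos a / sin a - cos b / sin b := by
  have hderiv : ∀ x ∈ uIcc a b,
      HasDerivAt (fun y ↦ -cos y / sin y) ((sin x ^ 2)⁻¹) x := by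
    intro x hx
    refine (((Real.hasDerivAt_cos x).neg).div (Real.hasDerivAt_sin x) (hsin x hx)).congr_deriv ?_
    have := hsin x hx
    simp only [Pi.neg_apply]
    field_simp
    linear_combination sin_sq_add_cos_sq x
  rw [integral_eq_sub_of_hasDerivAt hderiv
    ((continuousOn_sin.pow 2).inv₀ fun x hx ↦ pow_ne_zero 2 (hsin x hx)).intervalIntegrable]
  ring

namespace Function.Periodic

variable {E : Type*} [NormedAddCommGroup E] {f : ℝ → E} {c : ℝ}

theorem norm_le_iSup_norm (hf : Periodic f c) (hc : c ≠ 0) (hcont : Continuous f) (x : ℝ) :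
    ‖f x‖ ≤ ⨆ y, ‖f y‖ :=
  le_ciSup ((hf.comp norm).compact_of_continuous hc hcont.norm).bddAbove x

variable [NormedSpace ℝ E]

theorem deriv (hf : Periodic f c) : Periodic (deriv f) c := fun x ↦ by
  rw [← deriv_comp_add_const, hf.funext]

theorem iteratedDeriv (hf : Periodic f c) (n : ℕ) : Periodic (iteratedDeriv n f) c := by
  induction n with
  | zero => simpa only [iteratedDeriv_zero] using hf
  | succ n ih => simpa only [iteratedDeriv_succ] using ih.deriv

theorem intervalIntegral_zero_two_mul_eq (hf : Periodic f (2 * c)) (hcont : Continuous f) :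
    ∫ x in 0..2 * c, f x = ∫ x in 0..c, (f x + f (-x)) := by
  have hint : ∀ a b, IntervalIntegrable f volume a b := hcont.intervalIntegrable
  rw [intervalIntegral.integral_add (hint 0 c)
      ((by fun_prop : Continuous fun x ↦ f (-x)).intervalIntegrable 0 c),
    intervalIntegral.integral_comp_neg, neg_zero, add_comm,
    intervalIntegral.integral_add_adjacent_intervals (hint _ _) (hint _ _),
    ← zero_add (2 * c), hf.intervalIntegral_add_eq 0 (-c)]
  ring_nf

end Function.Periodic

theorem norm_deriv_le_mul_abs_and_norm_le_mul_sq {E : Type*} [NormedAddCommGroup E]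
    [NormedSpace ℝ E] {f : ℝ → E} {M a : ℝ} (hf : Differentiable ℝ f)
    (hf' : Differentiable ℝ (deriv f)) (hM : ∀ x, ‖deriv (deriv f) x‖ ≤ M) (ha : f a = 0)
    (ha' : deriv f a = 0) (x : ℝ) :
    ‖deriv f x‖ ≤ M * |x - a| ∧ ‖f x‖ ≤ M * (x - a) ^ 2 := by
  have hM0 : 0 ≤ M := (norm_nonneg _).trans (hM a)
  have hd : ∀ y, ‖deriv f y‖ ≤ M * |y - a| := fun y ↦ by
    simpa [ha'] using convex_univ.norm_image_sub_le_of_norm_deriv_le (fun z _ ↦ hf' z)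
      (fun z _ ↦ hM z) (mem_univ a) (mem_univ y)
  refine ⟨hd x, ?_⟩
  have := (convex_closedBall a |x - a|).norm_image_sub_le_of_norm_deriv_le (fun z _ ↦ hf z)
    (fun z hz ↦ (hd z).trans (mul_le_mul_of_nonneg_left (by rwa [← Real.dist_eq]) hM0))
    (Metric.mem_closedBall_self (abs_nonneg _)) (by rw [Metric.mem_closedBall, Real.dist_eq])
  rwa [ha, sub_zero, Real.norm_eq_abs, mul_assoc, ← sq, sq_abs] at this

theorem norm_le_sin_sq_of_vanishing_at_zero_pi {E : Type*} [NormedAddCommGroup E]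
    [NormedSpace ℝ E] {G : ℝ → E} {M θ : ℝ} (hG : Differentiable ℝ G)
    (hG' : Differentiable ℝ (deriv G)) (hM : ∀ x, ‖deriv (deriv G) x‖ ≤ M) (h0 : G 0 = 0)
    (h0' : deriv G 0 = 0) (hπ : G π = 0) (hπ' : deriv G π = 0) (hθ : θ ∈ Icc 0 π) :
    ‖G θ‖ ≤ 4 * M * sin θ ^ 2 ∧ ‖deriv G θ‖ ≤ 2 * M * sin θ := by
  have hM0 : 0 ≤ M := (norm_nonneg _).trans (hM 0)
  have key : ∀ a, G a = 0 → deriv G a = 0 → |θ - a| ≤ 2 * sin θ →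
      ‖G θ‖ ≤ 4 * M * sin θ ^ 2 ∧ ‖deriv G θ‖ ≤ 2 * M * sin θ := by
    intro a ha ha' hθa
    obtain ⟨h1, h2⟩ := norm_deriv_le_mul_abs_and_norm_le_mul_sq hG hG' hM ha ha' θ
    rw [← sq_abs] at h2
    constructor
    · calc ‖G θ‖ ≤ M * (2 * sin θ) ^ 2 := h2.trans (by gcongr)
        _ = 4 * M * sin θ ^ 2 := by ring
    · calc ‖deriv G θ‖ ≤ M * (2 * sin θ) := h1.trans (by gcongr)
        _ = 2 * M * sin θ := by ring
  rcases le_total θ (π / 2) with h | h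
  · refine key 0 h0 h0' ?_
    rw [sub_zero, abs_of_nonneg hθ.1]
    exact le_two_mul_sin hθ.1 h
  · refine key π hπ hπ' ?_
    rw [abs_sub_comm, abs_of_nonneg (by linarith [hθ.2]), ← sin_pi_sub]
    exact le_two_mul_sin (by linarith [hθ.2]) (by linarith)

noncomputable def cosPhase (t θ : ℝ) : ℂ := Complex.exp (-Complex.I * t * cos θ)

lemma norm_cosPhase (t θ : ℝ) : ‖cosPhase t θ‖ = 1 := by
  rw [cosPhase, Complex.norm_exp]
  simp [Complex.mul_re]

@[fun_prop]
lemma continuous_cosPhase (t : ℝ) : Continuous (cosPhase t) := by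
  unfold cosPhase
  fun_prop

lemma cosPhase_neg (t θ : ℝ) : cosPhase t (-θ) = cosPhase t θ := by
  simp [cosPhase]

lemma hasDerivAt_cosPhase (t θ : ℝ) :
    HasDerivAt (cosPhase t) (Complex.I * t * sin θ * cosPhase t θ) θ := by
  have : HasDerivAt (cosPhase t) _ θ :=
    (((Real.hasDerivAt_cos θ).ofReal_comp).const_mul (-Complex.I * t)).cexp
  convert this using 1
  simp only [cosPhase]
  push_cast
  ring

lemma norm_integral_cosPhase_mul_le_of_hasDerivAt_div_sin {t a b : ℝ} (ht : t ≠ 0) {F F' : ℝ → ℂ}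
    (hsin : ∀ x ∈ uIcc a b, sin x ≠ 0)
    (hF : ∀ x ∈ uIcc a b, HasDerivAt (fun y ↦ F y / sin y) (F' x) x)
    (hF' : IntervalIntegrable F' volume a b) :
    ‖∫ θ in a..b, cosPhase t θ * F θ‖ ≤
      |t|⁻¹ * (‖F a / sin a‖ + ‖F b / sin b‖ + ‖∫ θ in a..b, cosPhase t θ * F' θ‖) := by
  -- `cosPhase t * F = (F / sin) * (cosPhase t)' / (I t)`; integrate by parts
  have hibp := integral_mul_deriv_eq_deriv_mul hF (fun θ _ ↦ hasDerivAt_cosPhase t θ) hF'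
    ((by fun_prop : Continuous fun θ : ℝ ↦ Complex.I * t * sin θ * cosPhase t θ)
      |>.intervalIntegrable _ _)
  have hI : ∫ θ in a..b, cosPhase t θ * F θ =
      (Complex.I * t)⁻¹ * ∫ θ in a..b, F θ / sin θ *
        (Complex.I * t * sin θ * cosPhase t θ) := by
    rw [← intervalIntegral.integral_const_mul]
    refine integral_congr fun θ hθ ↦ ?_
    have : (sin θ : ℂ) ≠ 0 := by exact_mod_cast hsin θ hθ
    have ht' : (t : ℂ) ≠ 0 := by exact_mod_cast ht
    field_simp
  rw [hI, hibp, norm_mul, norm_inv, norm_mul, Complex.norm_I, one_mul, Complex.norm_real,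
    Real.norm_eq_abs]
  gcongr
  refine (norm_sub_le _ _).trans (add_le_add ((norm_sub_le _ _).trans_eq ?_) (le_of_eq ?_))
  · simp only [norm_mul, norm_cosPhase, mul_one]; ring
  · simp_rw [mul_comm (F' _)]

noncomputable def sinWronskian (G : ℝ → ℂ) (θ : ℝ) : ℂ :=
  deriv G θ * sin θ - G θ * cos θ

section SinWronskian

variable {G : ℝ → ℂ} {θ K : ℝ}

lemma hasDerivAt_div_sin (hG : DifferentiableAt ℝ G θ) (hθ : sin θ ≠ 0) :
    HasDerivAt (fun x ↦ G x / sin x) (sinWronskian G θ / sin θ ^ 2) θ :=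
  hG.hasDerivAt.div (Real.hasDerivAt_sin θ).ofReal_comp (by exact_mod_cast hθ)

lemma hasDerivAt_sinWronskian (hG : DifferentiableAt ℝ G θ)
    (hG' : DifferentiableAt ℝ (deriv G) θ) :
    HasDerivAt (sinWronskian G) (sin θ * (deriv (deriv G) θ + G θ)) θ := by
  refine ((hG'.hasDerivAt.mul (Real.hasDerivAt_sin θ).ofReal_comp).sub
    (hG.hasDerivAt.mul (Real.hasDerivAt_cos θ).ofReal_comp)).congr_deriv ?_
  push_cast
  ring

lemma hasDerivAt_sinWronskian_div_sin_pow_three (hG : DifferentiableAt ℝ G θ)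
    (hG' : DifferentiableAt ℝ (deriv G) θ) (hθ : sin θ ≠ 0) :
    HasDerivAt (fun x ↦ sinWronskian G x / sin x ^ 3)
      ((deriv (deriv G) θ + G θ) / sin θ ^ 2 -
        3 * cos θ * sinWronskian G θ / sin θ ^ 4) θ := by
  have hθ' : (sin θ : ℂ) ≠ 0 := by exact_mod_cast hθ
  refine ((hasDerivAt_sinWronskian hG hG').div ((Real.hasDerivAt_sin θ).ofReal_comp.pow 3)
    (pow_ne_zero 3 hθ')).congr_deriv ?_
  simp only [Pi.pow_apply]
  field_simp
  ring

lemma norm_sinWronskian_le (hθ : 0 ≤ sin θ) (h0 : ‖G θ‖ ≤ K * sin θ ^ 2)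
    (h1 : ‖deriv G θ‖ ≤ K * sin θ) :
    ‖sinWronskian G θ‖ ≤ 2 * K * sin θ ^ 2 := by
  have hcos : ‖(cos θ : ℂ)‖ ≤ 1 := by
    rw [Complex.norm_real, Real.norm_eq_abs]
    exact Real.abs_cos_le_one θ
  calc ‖sinWronskian G θ‖ ≤ ‖deriv G θ‖ * sin θ + ‖G θ‖ * 1 := by
        refine (norm_sub_le _ _).trans ?_
        rw [norm_mul, norm_mul, Complex.norm_real, Real.norm_of_nonneg hθ]
        gcongr
    _ ≤ K * sin θ * sin θ + K * sin θ ^ 2 :=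
        add_le_add (mul_le_mul_of_nonneg_right h1 hθ) ((mul_one _).trans_le h0)
    _ = 2 * K * sin θ ^ 2 := by ring

lemma norm_deriv_sinWronskian_div_sin_pow_three_le (hθ : 0 < sin θ)
    (h0 : ‖G θ‖ ≤ K * sin θ ^ 2) (h1 : ‖deriv G θ‖ ≤ K * sin θ)
    (h2 : ‖deriv (deriv G) θ‖ ≤ K) :
    ‖(deriv (deriv G) θ + G θ) / sin θ ^ 2 -
        3 * cos θ * sinWronskian G θ / sin θ ^ 4‖ ≤ 8 * K / sin θ ^ 2 := by
  have hK : 0 ≤ K := (norm_nonneg _).trans h2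
  have hsin1 : sin θ ^ 2 ≤ 1 := by nlinarith [sin_le_one θ]
  have hcos : ‖(3 * cos θ : ℂ)‖ ≤ 3 := by
    rw [norm_mul, Complex.norm_real, Real.norm_eq_abs, Complex.norm_ofNat]
    linarith [Real.abs_cos_le_one θ]
  have hW := norm_sinWronskian_le hθ.le h0 h1
  have hs : ‖(sin θ : ℂ)‖ = sin θ := by
    rw [Complex.norm_real, Real.norm_of_nonneg hθ.le]
  calc _ ≤ ‖deriv (deriv G) θ + G θ‖ / sin θ ^ 2 +
        ‖(3 * cos θ : ℂ)‖ * ‖sinWronskian G θ‖ / sin θ ^ 4 := by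
        refine (norm_sub_le _ _).trans_eq ?_
        rw [norm_div, norm_div, norm_mul, norm_pow, norm_pow, hs]
    _ ≤ (K + K * 1) / sin θ ^ 2 + 3 * (2 * K * sin θ ^ 2) / sin θ ^ 4 := by
        gcongr
        exact (norm_add_le _ _).trans (add_le_add h2 (h0.trans (by gcongr)))
    _ = 8 * K / sin θ ^ 2 := by field_simp; ring

lemma continuous_sinWronskian (hG : ContDiff ℝ 2 G) : Continuous (sinWronskian G) := by
  have := hG.continuous
  have : Continuous (deriv G) := (hG.iterate_deriv' 1 1).continuous
  unfold sinWronskian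
  fun_prop

end SinWronskian

theorem norm_integral_cosPhase_mul_sinWronskian_div_le {t a b K : ℝ} {G : ℝ → ℂ} (ht : t ≠ 0)
    (hab : a ≤ b) (hsin : ∀ θ ∈ Icc a b, 0 < sin θ) (hG : ContDiff ℝ 2 G)
    (h0 : ∀ θ ∈ Icc a b, ‖G θ‖ ≤ K * sin θ ^ 2)
    (h1 : ∀ θ ∈ Icc a b, ‖deriv G θ‖ ≤ K * sin θ)
    (h2 : ∀ θ ∈ Icc a b, ‖deriv (deriv G) θ‖ ≤ K) :
    ‖∫ θ in a..b, cosPhase t θ * (sinWronskian G θ / sin θ ^ 2)‖ ≤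
      |t|⁻¹ * (2 * K / sin a + 2 * K / sin b + 8 * K * (cos a / sin a - cos b / sin b)) := by
  rw [← uIcc_of_le hab] at hsin h0 h1 h2
  have hsin0 : ∀ θ ∈ uIcc a b, sin θ ≠ 0 := fun θ hθ ↦ (hsin θ hθ).ne'
  set W := sinWronskian G
  set w : ℝ → ℂ := fun θ ↦ (deriv (deriv G) θ + G θ) / sin θ ^ 2 - 3 * cos θ * W θ / sin θ ^ 4
  have hderiv : ∀ θ ∈ uIcc a b, HasDerivAt (fun x ↦ W x / sin x ^ 2 / sin x) (w θ) θ :=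
    fun θ hθ ↦ by
      simpa only [div_div, ← pow_succ] using hasDerivAt_sinWronskian_div_sin_pow_three
        (hG.differentiable (by norm_num) θ)
        ((hG.iterate_deriv' 1 1).differentiable (by norm_num) θ) (hsin0 θ hθ)
  have hw : ContinuousOn w (uIcc a b) := by
    have : Continuous (deriv (deriv G)) := (hG.iterate_deriv' 0 2).continuous
    have := hG.continuous
    have := continuous_sinWronskian hG
    refine ContinuousOn.sub ?_ ?_ <;> refine ContinuousOn.div (by fun_prop) (by fun_prop) ?_ <;>
      exact fun θ hθ ↦ pow_ne_zero _ (by exact_mod_cast hsin0 θ hθ)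
  have hend : ∀ θ ∈ uIcc a b, ‖W θ / sin θ ^ 2 / sin θ‖ ≤ 2 * K / sin θ := fun θ hθ ↦ by
    have hs := hsin θ hθ
    rw [norm_div, norm_div, norm_pow, Complex.norm_real, Real.norm_of_nonneg hs.le, div_div,
      ← pow_succ, div_le_div_iff₀ (by positivity) hs, pow_succ, ← mul_assoc]
    exact mul_le_mul_of_nonneg_right (norm_sinWronskian_le hs.le (h0 θ hθ) (h1 θ hθ)) hs.le
  have hrest : ‖∫ θ in a..b, cosPhase t θ * w θ‖ ≤
      8 * K * (cos a / sin a - cos b / sin b) := by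
    rw [← integral_inv_sin_sq hsin0, ← intervalIntegral.integral_const_mul]
    refine norm_integral_le_of_norm_le hab (ae_of_all _ fun θ hθ ↦ ?_)
      (((continuousOn_sin.pow 2).inv₀ fun x hx ↦
        pow_ne_zero 2 (hsin0 x hx)).intervalIntegrable.const_mul _)
    have hθ' : θ ∈ uIcc a b := uIcc_of_le hab ▸ Ioc_subset_Icc_self hθ
    rw [norm_mul, norm_cosPhase, one_mul, ← div_eq_mul_inv]
    exact norm_deriv_sinWronskian_div_sin_pow_three_le (hsin θ hθ') (h0 θ hθ') (h1 θ hθ')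
      (h2 θ hθ')
  refine (norm_integral_cosPhase_mul_le_of_hasDerivAt_div_sin ht hsin0 hderiv
    hw.intervalIntegrable).trans (mul_le_mul_of_nonneg_left ?_ (by positivity))
  exact add_le_add (add_le_add (hend a left_mem_uIcc) (hend b right_mem_uIcc)) hrest

theorem norm_integral_cosPhase_mul_le_of_sin_bounds {t a b K : ℝ} {G : ℝ → ℂ} (ht : t ≠ 0)
    (hab : a ≤ b) (hsin : ∀ θ ∈ Icc a b, 0 < sin θ) (hG : ContDiff ℝ 2 G)
    (h0 : ∀ θ ∈ Icc a b, ‖G θ‖ ≤ K * sin θ ^ 2)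
    (h1 : ∀ θ ∈ Icc a b, ‖deriv G θ‖ ≤ K * sin θ)
    (h2 : ∀ θ ∈ Icc a b, ‖deriv (deriv G) θ‖ ≤ K) :
    ‖∫ θ in a..b, cosPhase t θ * G θ‖ ≤
      |t|⁻¹ * (K * sin a + K * sin b + |t|⁻¹ * (2 * K / sin a +
        2 * K / sin b + 8 * K * (cos a / sin a - cos b / sin b))) := by
  have hsin0 : ∀ θ ∈ uIcc a b, sin θ ≠ 0 := fun θ hθ ↦ (hsin θ (uIcc_of_le hab ▸ hθ)).ne'
  have hend : ∀ θ ∈ Icc a b, ‖G θ / sin θ‖ ≤ K * sin θ := fun θ hθ ↦ by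
    rw [norm_div, Complex.norm_real, Real.norm_of_nonneg (hsin θ hθ).le, div_le_iff₀ (hsin θ hθ)]
    exact (h0 θ hθ).trans_eq (by ring)
  have hW : ContinuousOn (fun θ ↦ sinWronskian G θ / sin θ ^ 2) (uIcc a b) :=
    (continuous_sinWronskian hG).continuousOn.div (by fun_prop)
      fun θ hθ ↦ pow_ne_zero 2 (by exact_mod_cast hsin0 θ hθ)
  refine (norm_integral_cosPhase_mul_le_of_hasDerivAt_div_sin ht hsin0
    (fun θ hθ ↦ hasDerivAt_div_sin (hG.differentiable (by norm_num) θ) (hsin0 θ hθ))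
    hW.intervalIntegrable).trans (mul_le_mul_of_nonneg_left ?_ (by positivity))
  exact add_le_add (add_le_add (hend a (left_mem_Icc.2 hab)) (hend b (right_mem_Icc.2 hab)))
    (norm_integral_cosPhase_mul_sinWronskian_div_le ht hab hsin hG h0 h1 h2)

lemma norm_integral_cosPhase_mul_le_of_abs_sin_le {t a b K s : ℝ} {G : ℝ → ℂ} (hab : a ≤ b)
    (hK : 0 ≤ K) (hG : ∀ θ ∈ Icc a b, ‖G θ‖ ≤ K * sin θ ^ 2)
    (hs : ∀ θ ∈ Icc a b, |sin θ| ≤ s) :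
    ‖∫ θ in a..b, cosPhase t θ * G θ‖ ≤ K * s ^ 2 * (b - a) := by
  refine (intervalIntegral.norm_integral_le_of_norm_le_const fun θ hθ ↦ ?_).trans_eq
    (by rw [abs_of_nonneg (by linarith)])
  have hθ' : θ ∈ Icc a b := Ioc_subset_Icc_self (uIoc_of_le hab ▸ hθ)
  rw [norm_mul, norm_cosPhase, one_mul]
  refine (hG θ hθ').trans (mul_le_mul_of_nonneg_left ?_ hK)
  rw [← sq_abs]
  exact pow_le_pow_left₀ (abs_nonneg _) (hs θ hθ') 2

theorem norm_integral_cosPhase_mul_le_of_sin_bounds_of_mul_sq_eq_one {t δ K : ℝ} {G : ℝ → ℂ}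
    (hδ : 0 < δ) (hδ1 : δ ≤ 1) (htδ : |t| * δ ^ 2 = 1) (hG : ContDiff ℝ 2 G)
    (h0 : ∀ θ ∈ Icc δ (π - δ), ‖G θ‖ ≤ K * sin θ ^ 2)
    (h1 : ∀ θ ∈ Icc δ (π - δ), ‖deriv G θ‖ ≤ K * sin θ)
    (h2 : ∀ θ ∈ Icc δ (π - δ), ‖deriv (deriv G) θ‖ ≤ K) :
    ‖∫ θ in δ..π - δ, cosPhase t θ * G θ‖ ≤ 42 * K * δ ^ 3 := by
  have hπ := Real.pi_gt_three
  have hδπ : δ ∈ Icc δ (π - δ) := left_mem_Icc.2 (by linarith)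
  have hK : 0 ≤ K := (norm_nonneg _).trans (h2 δ hδπ)
  have ht : t ≠ 0 := by rintro rfl; simp at htδ
  have htinv : |t|⁻¹ = δ ^ 2 := inv_eq_of_mul_eq_one_left ((mul_comm _ _).trans htδ)
  have hmid := norm_integral_cosPhase_mul_le_of_sin_bounds ht hδπ.2
    (fun θ hθ ↦ sin_pos_of_pos_of_lt_pi (by linarith [hθ.1]) (by linarith [hθ.2])) hG h0 h1 h2
  rw [sin_pi_sub, cos_pi_sub, htinv] at hmid
  have hsin : δ / 2 ≤ sin δ := by linarith [le_two_mul_sin hδ.le (by linarith)]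
  have hsin' : sin δ ≤ δ := sin_le hδ.le
  have hinner : 2 * K / sin δ + 2 * K / sin δ +
      8 * K * (cos δ / sin δ - -cos δ / sin δ) ≤ 40 * K / δ :=
    calc _ = (4 * K + 16 * K * cos δ) / sin δ := by ring
      _ ≤ (4 * K + 16 * K * 1) / (δ / 2) := by gcongr; exact cos_le_one δ
      _ = 40 * K / δ := by field_simp; ring
  calc _ ≤ δ ^ 2 * (K * δ + K * δ + δ ^ 2 * (40 * K / δ)) := hmid.trans (by gcongr)
    _ = 42 * K * δ ^ 3 := by field_simp; ring

theorem norm_integral_zero_pi_cosPhase_mul_le {t δ K : ℝ} {G : ℝ → ℂ} (hδ : 0 < δ) (hδ1 : δ ≤ 1)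
    (htδ : |t| * δ ^ 2 = 1) (hG : ContDiff ℝ 2 G)
    (h0 : ∀ θ ∈ Icc 0 π, ‖G θ‖ ≤ K * sin θ ^ 2)
    (h1 : ∀ θ ∈ Icc 0 π, ‖deriv G θ‖ ≤ K * sin θ)
    (h2 : ∀ θ ∈ Icc 0 π, ‖deriv (deriv G) θ‖ ≤ K) :
    ‖∫ θ in 0..π, cosPhase t θ * G θ‖ ≤ 44 * K * δ ^ 3 := by
  have hπ := Real.pi_gt_three
  have hK : 0 ≤ K := (norm_nonneg _).trans (h2 0 ⟨le_rfl, Real.pi_pos.le⟩)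
  have hsub : Icc δ (π - δ) ⊆ Icc 0 π := Icc_subset_Icc (by linarith) (by linarith)
  have hmid := norm_integral_cosPhase_mul_le_of_sin_bounds_of_mul_sq_eq_one (t := t) hδ hδ1 htδ hG
    (fun θ hθ ↦ h0 θ (hsub hθ)) (fun θ hθ ↦ h1 θ (hsub hθ)) (fun θ hθ ↦ h2 θ (hsub hθ))
  have hleft := norm_integral_cosPhase_mul_le_of_abs_sin_le (t := t) (s := δ) hδ.le hK
    (fun θ hθ ↦ h0 θ ⟨hθ.1, by linarith [hθ.2]⟩) fun θ hθ ↦ by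
      rw [abs_of_nonneg (sin_nonneg_of_nonneg_of_le_pi hθ.1 (by linarith [hθ.2]))]
      exact (sin_le hθ.1).trans hθ.2
  have hright := norm_integral_cosPhase_mul_le_of_abs_sin_le (t := t) (s := δ)
    (by linarith : π - δ ≤ π) hK (fun θ hθ ↦ h0 θ ⟨by linarith [hθ.1], hθ.2⟩) fun θ hθ ↦ by
      rw [← sin_pi_sub, abs_of_nonneg (sin_nonneg_of_nonneg_of_le_pi
        (by linarith [hθ.2]) (by linarith [hθ.1]))]
      exact (sin_le (by linarith [hθ.2])).trans (by linarith [hθ.1])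
  have hint : ∀ a b, IntervalIntegrable (fun θ ↦ cosPhase t θ * G θ) volume a b :=
    ((continuous_cosPhase t).mul hG.continuous).intervalIntegrable
  rw [← integral_add_adjacent_intervals (hint 0 δ) (hint δ π),
    ← integral_add_adjacent_intervals (hint δ (π - δ)) (hint (π - δ) π)]
  calc _ ≤ K * δ ^ 2 * (δ - 0) + (42 * K * δ ^ 3 + K * δ ^ 2 * (π - (π - δ))) :=
        (norm_add_le _ _).trans
          (add_le_add hleft ((norm_add_le _ _).trans (add_le_add hmid hright)))
    _ = 44 * K * δ ^ 3 := by ring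

noncomputable def symmetrize (g : ℝ → ℂ) (θ : ℝ) : ℂ := g θ + g (-θ)

section Symmetrize

variable {g : ℝ → ℂ}

lemma contDiff_symmetrize {n : WithTop ℕ∞} (hg : ContDiff ℝ n g) : ContDiff ℝ n (symmetrize g) :=
  hg.add (hg.comp contDiff_neg)

lemma deriv_symmetrize (hg : Differentiable ℝ g) :
    deriv (symmetrize g) = fun θ ↦ deriv g θ - deriv g (-θ) := by
  ext θ
  change deriv (fun θ ↦ g θ + g (-θ)) θ = _
  rw [deriv_fun_add (hg θ) (by fun_prop), deriv_comp_neg, sub_eq_add_neg]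

lemma deriv_deriv_symmetrize (hg : Differentiable ℝ g) (hg' : Differentiable ℝ (deriv g)) :
    deriv (deriv (symmetrize g)) = symmetrize (deriv (deriv g)) := by
  ext θ
  rw [deriv_symmetrize hg, symmetrize, deriv_fun_sub (hg' θ) (by fun_prop), deriv_comp_neg,
    sub_neg_eq_add]

lemma symmetrize_zero (h0 : g 0 = 0) : symmetrize g 0 = 0 := by
  simp [symmetrize, h0]

lemma symmetrize_pi (hper : Function.Periodic g (2 * π)) (hπ : g π = 0) : symmetrize g π = 0 := by
  rw [symmetrize, ← hper (-π)]
  ring_nf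
  simp [hπ]

lemma deriv_symmetrize_zero (hg : Differentiable ℝ g) : deriv (symmetrize g) 0 = 0 := by
  simp [deriv_symmetrize hg]

lemma deriv_symmetrize_pi (hg : Differentiable ℝ g) (hper : Function.Periodic g (2 * π)) :
    deriv (symmetrize g) π = 0 := by
  simp only [deriv_symmetrize hg]
  rw [← hper.deriv (-π)]
  ring_nf

lemma integral_zero_two_pi_cosPhase_mul (hper : Function.Periodic g (2 * π))
    (hg : Continuous g) (t : ℝ) :
    ∫ θ in 0..2 * π, cosPhase t θ * g θ = ∫ θ in 0..π, cosPhase t θ * symmetrize g θ := by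
  have hf : Function.Periodic (fun θ ↦ cosPhase t θ * g θ) (2 * π) := fun θ ↦ by
    simp only [cosPhase, cos_add_two_pi, hper θ]
  rw [hf.intervalIntegral_zero_two_mul_eq ((continuous_cosPhase t).mul hg)]
  simp only [cosPhase_neg, symmetrize, mul_add]

end Symmetrize

lemma exists_mul_sq_eq_one_and_pow_three_eq_rpow {x : ℝ} (hx : 1 ≤ x) :
    ∃ δ : ℝ, 0 < δ ∧ δ ≤ 1 ∧ x * δ ^ 2 = 1 ∧ δ ^ 3 = x ^ (-(3 : ℝ) / 2) := by
  have hx0 : 0 ≤ x := by linarith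
  refine ⟨x ^ (-(1 : ℝ) / 2), by positivity, Real.rpow_le_one_of_one_le_of_nonpos hx (by norm_num),
    ?_, ?_⟩
  · rw [← Real.rpow_natCast, ← Real.rpow_mul hx0]
    norm_num [Real.rpow_neg_one, mul_inv_cancel₀ (zero_lt_one.trans_le hx).ne']
  · rw [← Real.rpow_natCast, ← Real.rpow_mul hx0]
    norm_num

theorem norm_integral_zero_two_pi_cosPhase_mul_le {g : ℝ → ℂ} {t M : ℝ} (hg : ContDiff ℝ 2 g)
    (hper : Function.Periodic g (2 * π)) (h0 : g 0 = 0) (hπ : g π = 0)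
    (hM : ∀ x, ‖deriv (deriv g) x‖ ≤ M) (ht : 1 ≤ |t|) :
    ‖∫ θ in 0..2 * π, cosPhase t θ * g θ‖ ≤ 352 * M * |t| ^ (-(3 : ℝ) / 2) := by
  have hM0 : 0 ≤ M := (norm_nonneg _).trans (hM 0)
  have hg1 : Differentiable ℝ g := hg.differentiable (by norm_num)
  have hg2 : Differentiable ℝ (deriv g) := (hg.iterate_deriv' 1 1).differentiable (by norm_num)
  have hG := contDiff_symmetrize hg
  have hG'' : ∀ θ, ‖deriv (deriv (symmetrize g)) θ‖ ≤ 2 * M := fun θ ↦ by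
    rw [deriv_deriv_symmetrize hg1 hg2, symmetrize]
    linarith [norm_add_le (deriv (deriv g) θ) (deriv (deriv g) (-θ)), hM θ, hM (-θ)]
  have hbounds := fun θ (hθ : θ ∈ Icc 0 π) ↦ norm_le_sin_sq_of_vanishing_at_zero_pi
    (hG.differentiable (by norm_num)) ((hG.iterate_deriv' 1 1).differentiable (by norm_num)) hG''
    (symmetrize_zero h0) (deriv_symmetrize_zero hg1) (symmetrize_pi hper hπ)
    (deriv_symmetrize_pi hg1 hper) hθ
  obtain ⟨δ, hδ, hδ1, htδ, hδ3⟩ := exists_mul_sq_eq_one_and_pow_three_eq_rpow ht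
  rw [integral_zero_two_pi_cosPhase_mul hper hg.continuous, ← hδ3]
  refine (norm_integral_zero_pi_cosPhase_mul_le (K := 8 * M) hδ hδ1 htδ hG
    (fun θ hθ ↦ (hbounds θ hθ).1.trans_eq (by ring))
    (fun θ hθ ↦ (hbounds θ hθ).2.trans (by nlinarith [sin_nonneg_of_nonneg_of_le_pi hθ.1 hθ.2]))
    (fun θ _ ↦ (hG'' θ).trans (by linarith))).trans_eq (by ring)

lemma rpow_neg_three_halves_le {x y : ℝ} (hy : 0 < y) (hyx : y ≤ 2 * x) :
    x ^ (-(3 : ℝ) / 2) ≤ 4 * y ^ (-(3 : ℝ) / 2) := by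
  have h2 : (2 : ℝ) ^ (3 / 2 : ℝ) ≤ 4 := by
    calc (2 : ℝ) ^ (3 / 2 : ℝ) ≤ 2 ^ (2 : ℝ) :=
          Real.rpow_le_rpow_of_exponent_le one_le_two (by norm_num)
      _ = 4 := by norm_num
  calc x ^ (-(3 : ℝ) / 2) ≤ (y / 2) ^ (-(3 : ℝ) / 2) :=
        Real.rpow_le_rpow_of_nonpos (by positivity) (by linarith) (by norm_num)
    _ = 2 ^ (3 / 2 : ℝ) * y ^ (-(3 : ℝ) / 2) := by
        rw [Real.div_rpow hy.le two_pos.le, div_eq_mul_inv, ← Real.rpow_neg two_pos.le]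
        ring_nf
    _ ≤ 4 * y ^ (-(3 : ℝ) / 2) := by gcongr

/-- Improved stationary-phase estimate (`d = 2`): there is `C > 0`
such that for every `2π`-periodic `C³` function `g : ℝ → ℂ` vanishing at the stationary
points `θ = 0` and `θ = π` of the phase `cos θ`, and every `t ∈ ℝ`,
`|∫₀^{2π} e^{-it cos θ} g(θ) dθ| ≤ C (1+|t|)^{-3/2} Σ_{m=0}^{3} sup |g^{(m)}|`. -/
theorem statement8 :
    ∃ C : ℝ, 0 < C ∧ ∀ g : ℝ → ℂ, Function.Periodic g (2 * π) → ContDiff ℝ 3 g →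
      g 0 = 0 → g π = 0 →
      ∀ t : ℝ,
        ‖∫ θ in (0 : ℝ)..(2 * π), Complex.exp (-Complex.I * t * Real.cos θ) * g θ‖ ≤
          C * (1 + |t|) ^ (-(3 : ℝ) / 2) *
            ∑ m ∈ Finset.range 4, ⨆ θ : ℝ, ‖iteratedDeriv m g θ‖ := by
  -- 1408 = 4 · 352, the factor 4 coming from `rpow_neg_three_halves_le`
  refine ⟨1408, by norm_num, fun g hper hg h0 hπ t ↦ ?_⟩
  set S := ∑ m ∈ Finset.range 4, ⨆ θ : ℝ, ‖iteratedDeriv m g θ‖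
  have hbound : ∀ m ≤ 3, ∀ θ, ‖iteratedDeriv m g θ‖ ≤ S := fun m hm θ ↦
    ((hper.iteratedDeriv m).norm_le_iSup_norm (by positivity)
      (hg.continuous_iteratedDeriv m (by exact_mod_cast hm)) θ).trans
      (Finset.single_le_sum (f := fun m ↦ ⨆ θ : ℝ, ‖iteratedDeriv m g θ‖)
        (fun i _ ↦ Real.iSup_nonneg fun θ ↦ norm_nonneg _) (Finset.mem_range.2 (by omega)))
  have hS0 : 0 ≤ S := (norm_nonneg _).trans (hbound 0 (by norm_num) 0)
  change ‖∫ θ in (0 : ℝ)..(2 * π), cosPhase t θ * g θ‖ ≤ _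
  rcases le_or_gt |t| 1 with ht | ht
  · have hsmall : ‖∫ θ in (0 : ℝ)..(2 * π), cosPhase t θ * g θ‖ ≤ S * |2 * π - 0| :=
      intervalIntegral.norm_integral_le_of_norm_le_const fun θ _ ↦ by
        simpa [norm_cosPhase] using hbound 0 (by norm_num) θ
    have := rpow_neg_three_halves_le (x := 1) (y := 1 + |t|) (by positivity) (by linarith)
    rw [Real.one_rpow] at this
    rw [sub_zero, abs_of_pos Real.two_pi_pos] at hsmall
    nlinarith [Real.pi_le_four, mul_le_mul_of_nonneg_right this hS0]
  · have hM : ∀ θ, ‖deriv (deriv g) θ‖ ≤ S := fun θ ↦ by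
      simpa [iteratedDeriv_succ] using hbound 2 (by norm_num) θ
    have hlarge := norm_integral_zero_two_pi_cosPhase_mul_le (hg.of_le (by norm_num)) hper h0 hπ
      hM ht.le
    have := rpow_neg_three_halves_le (x := |t|) (y := 1 + |t|) (by positivity) (by linarith)
    nlinarith [Real.rpow_nonneg (abs_nonneg t) (-(3 : ℝ) / 2)]
end

section
/- Fix ν ≥ 0, ψ̄ ≥ 0, k > 0, and ι ∈ {+1, −1}. Let h : ℝ × [0,∞) → ℂ be a classical solution, 2π-periodic in θ, of ∂_t h(θ,t) + i k cos θ · h(θ,t) + 2 ι ψ̄ cos θ sin θ · a(t) = ν ∂²_θ h(θ,t), where a(t) = ∫₀^{2π} cos φ sin φ · h(φ,t) dφ. Then the function t ↦ ‖h(·,t)‖² = ∫₀^{2π} |h(θ,t)|² dθ is differentiable on (0,∞) and satisfies (1/2) d/dt ‖h(·,t)‖² = −ν ∫₀^{2π} |∂_θ h(θ,t)|² dθ − 2 ι ψ̄ |a(t)|². In particular, in the puller case ι = +1 the L² norm ‖h(·,t)‖ is nonincreasing in t. -/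
open Real MeasureTheory intervalIntegral

/-!
Take the real part of `conj h` times the equation. The transport term `i k cos θ |h|²` is purely
imaginary and drops out; integrating `ν conj h ∂²_θ h` by parts over a period gives
`-ν ∫ |∂_θ h|²`; and since `∫ cos φ sin φ conj h = conj a`, the active-stress term integrates to
`2 ι ψ̄ |a|²`. Joint continuity of `h` and `∂_t h` gives a uniform bound on compact time
intervals, so the time derivative may be taken under the integral.
-/

open Function Set Filter Topology
open scoped InnerProductSpace

theorem Function.Periodic.periodic_deriv_of_hasDerivAt {F : Type*} [NormedAddCommGroup F]
    [NormedSpace ℝ F] {u u' : ℝ → F} {T : ℝ} (hper : Periodic u T)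
    (hu : ∀ x, HasDerivAt u (u' x) x) : Periodic u' T := fun x =>
  have hshift : HasDerivAt (fun y => u (y + T)) (u' (x + T)) x := (hu (x + T)).comp_add_const x T
  (hu x).unique (funext hper ▸ hshift) |>.symm

theorem Function.Periodic.integral_inner_eq_neg_integral_norm_sq_deriv {F : Type*}
    [NormedAddCommGroup F] [InnerProductSpace ℝ F] {u u' u'' : ℝ → F} {T : ℝ} (hper : Periodic u T)
    (hu : ∀ x, HasDerivAt u (u' x) x) (hu' : ∀ x, HasDerivAt u' (u'' x) x)
    (hu'' : Continuous u'') :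
    ∫ x in 0..T, ⟪u x, u'' x⟫_ℝ = -∫ x in 0..T, ‖u' x‖ ^ 2 := by
  have hcu : Continuous u := continuous_iff_continuousAt.2 fun x => (hu x).continuousAt
  have hcu' : Continuous u' := continuous_iff_continuousAt.2 fun x => (hu' x).continuousAt
  have hc₁ : Continuous fun x => ⟪u x, u'' x⟫_ℝ := by fun_prop
  have hc₂ : Continuous fun x => ⟪u' x, u' x⟫_ℝ := by fun_prop
  have hftc : ∫ x in 0..T, (⟪u x, u'' x⟫_ℝ + ⟪u' x, u' x⟫_ℝ) = ⟪u T, u' T⟫_ℝ - ⟪u 0, u' 0⟫_ℝ :=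
    integral_eq_sub_of_hasDerivAt (fun x _ => (hu x).inner ℝ (hu' x))
      ((hc₁.add hc₂).intervalIntegrable _ _)
  have hboundary : ⟪u T, u' T⟫_ℝ = ⟪u 0, u' 0⟫_ℝ := by
    simpa only [zero_add] using
      congrArg₂ (⟪·, ·⟫_ℝ) (hper 0) (hper.periodic_deriv_of_hasDerivAt hu 0)
  rw [integral_add (hc₁.intervalIntegrable _ _) (hc₂.intervalIntegrable _ _), hboundary,
    sub_self] at hftc
  simp only [real_inner_self_eq_norm_sq] at hftc
  linarith

theorem hasDerivAt_intervalIntegral_of_continuousOn {E : Type*} [NormedAddCommGroup E]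
    [NormedSpace ℝ E] {F F' : ℝ → ℝ → E} {a b t : ℝ} {U : Set ℝ} (hU : U ∈ 𝓝 t)
    (hF : ∀ x ∈ U, ContinuousOn (F x) (uIcc a b))
    (hF' : ContinuousOn (uncurry F') (U ×ˢ uIcc a b))
    (hderiv : ∀ x ∈ U, ∀ θ ∈ uIcc a b, HasDerivAt (F · θ) (F' x θ) x) :
    HasDerivAt (fun x => ∫ θ in a..b, F x θ) (∫ θ in a..b, F' t θ) t := by
  obtain ⟨ε, hε, hballU⟩ := Metric.mem_nhds_iff.1 hU
  have hclosedBallU : Metric.closedBall t (ε / 2) ⊆ U :=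
    (Metric.closedBall_subset_ball (half_lt_self hε)).trans hballU
  obtain ⟨C, hC⟩ := (isCompact_closedBall t (ε / 2)).prod isCompact_uIcc
    |>.exists_bound_of_continuousOn (hF'.mono (prod_mono hclosedBallU subset_rfl))
  have hF't : ContinuousOn (F' t) (uIcc a b) :=
    hF'.comp (continuousOn_const.prodMk continuousOn_id) fun θ hθ => ⟨mem_of_mem_nhds hU, hθ⟩
  refine (hasDerivAt_integral_of_dominated_loc_of_deriv_le (bound := fun _ => C)
    (Metric.ball_mem_nhds t (half_pos hε)) ?_ ((hF t (mem_of_mem_nhds hU)).intervalIntegrable)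
    ((hF't.mono uIoc_subset_uIcc).aestronglyMeasurable measurableSet_uIoc) ?_
    intervalIntegrable_const ?_).2
  · filter_upwards [hU] with x hx
    exact ((hF x hx).mono uIoc_subset_uIcc).aestronglyMeasurable measurableSet_uIoc
  · exact ae_of_all _ fun θ hθ x hx =>
      hC (x, θ) ⟨Metric.ball_subset_closedBall hx, uIoc_subset_uIcc hθ⟩
  · exact ae_of_all _ fun θ hθ x hx =>
      hderiv x (hclosedBallU (Metric.ball_subset_closedBall hx)) θ (uIoc_subset_uIcc hθ)

theorem continuousOn_intervalIntegral_of_continuousOn_prod {E : Type*} [NormedAddCommGroup E]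
    [NormedSpace ℝ E] {F : ℝ → ℝ → E} {s : Set ℝ} (hF : ContinuousOn (uncurry F) (s ×ˢ univ))
    (a b : ℝ) : ContinuousOn (fun x => ∫ θ in a..b, F x θ) s := by
  rw [continuousOn_iff_continuous_domRestrict]
  exact continuous_parametric_intervalIntegral_of_continuous' (f := fun (x : s) θ => F x θ)
    (hF.comp_continuous (continuous_subtype_val.prodMap continuous_id) fun p => ⟨p.1.2, trivial⟩)
    a b

section HalfLineInTime

variable {E : Type*} [NormedAddCommGroup E] {g : ℝ → ℝ → E}

theorem continuousOn_uncurry_flip_of_nonneg_snd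
    (hg : ContinuousOn (uncurry g) {p : ℝ × ℝ | 0 ≤ p.2}) :
    ContinuousOn (uncurry (flip g)) (Ici 0 ×ˢ univ) :=
  hg.comp continuous_swap.continuousOn fun _ hp => hp.1

theorem continuous_slice_of_nonneg_snd (hg : ContinuousOn (uncurry g) {p : ℝ × ℝ | 0 ≤ p.2})
    {t : ℝ} (ht : 0 ≤ t) : Continuous (g · t) :=
  hg.comp_continuous (continuous_id.prodMk continuous_const) fun _ => ht

theorem hasDerivAt_integral_norm_sq [InnerProductSpace ℝ E] {g' : ℝ → ℝ → E} {a b t : ℝ}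
    (ht : 0 < t) (hg : ContinuousOn (uncurry g) {p : ℝ × ℝ | 0 ≤ p.2})
    (hg' : ContinuousOn (uncurry g') {p : ℝ × ℝ | 0 ≤ p.2})
    (hderiv : ∀ θ s, 0 < s → HasDerivAt (g θ ·) (g' θ s) s) :
    HasDerivAt (fun s => ∫ θ in a..b, ‖g θ s‖ ^ 2) (∫ θ in a..b, 2 * ⟪g θ t, g' θ t⟫_ℝ) t := by
  refine hasDerivAt_intervalIntegral_of_continuousOn (Ioi_mem_nhds ht)
    (fun s hs => ((continuous_slice_of_nonneg_snd hg (le_of_lt hs)).norm.pow 2).continuousOn)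
    ?_ fun s hs θ _ => (hderiv θ s hs).norm_sq
  refine ContinuousOn.mono ?_ (prod_mono Ioi_subset_Ici_self (subset_univ _))
  exact continuousOn_const.mul ((continuousOn_uncurry_flip_of_nonneg_snd hg).inner
    (continuousOn_uncurry_flip_of_nonneg_snd hg'))

end HalfLineInTime

/-- The moment `a(t)` of the equation, for the slice `u = h(·, t)`. -/
noncomputable def cosSinMoment (u : ℝ → ℂ) : ℂ :=
  ∫ φ in (0 : ℝ)..(2 * π), (cos φ : ℂ) * (sin φ : ℂ) * u φ

theorem inner_eq_of_linearized_eq {ν ψ k ι c s : ℝ} {u v w A : ℂ}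
    (h : v + Complex.I * k * c * u + 2 * ι * ψ * c * s * A = ν * w) :
    ⟪u, v⟫_ℝ = ν * ⟪u, w⟫_ℝ - 2 * ι * ψ * ⟪A, c * s * u⟫_ℝ := by
  rw [eq_sub_of_add_eq (eq_sub_of_add_eq h)]
  simp only [Complex.inner, Complex.mul_re, Complex.mul_im, Complex.sub_re, Complex.sub_im,
    Complex.conj_re, Complex.conj_im, Complex.ofReal_re, Complex.ofReal_im, Complex.I_re,
    Complex.I_im, Complex.re_ofNat, Complex.im_ofNat]
  ring

theorem integral_inner_cosSinMoment {u : ℝ → ℂ} (hu : Continuous u) (A : ℂ) :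
    ∫ θ in (0 : ℝ)..(2 * π), ⟪A, (cos θ : ℂ) * (sin θ : ℂ) * u θ⟫_ℝ = ⟪A, cosSinMoment u⟫_ℝ :=
  (innerSL ℝ A).intervalIntegral_comp_comm ((by fun_prop : Continuous fun θ : ℝ =>
    (cos θ : ℂ) * (sin θ : ℂ) * u θ).intervalIntegrable _ _)

theorem integral_inner_eq_of_linearized_eq {ν ψ k ι : ℝ} {u u' u'' v : ℝ → ℂ}
    (hper : Periodic u (2 * π)) (hu : ∀ θ, HasDerivAt u (u' θ) θ)
    (hu' : ∀ θ, HasDerivAt u' (u'' θ) θ) (hu'' : Continuous u'')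
    (heq : ∀ θ, v θ + Complex.I * k * (cos θ : ℂ) * u θ +
      2 * (ι : ℂ) * (ψ : ℂ) * (cos θ : ℂ) * (sin θ : ℂ) * cosSinMoment u = (ν : ℂ) * u'' θ) :
    ∫ θ in (0 : ℝ)..(2 * π), ⟪u θ, v θ⟫_ℝ =
      -ν * (∫ θ in (0 : ℝ)..(2 * π), ‖u' θ‖ ^ 2) - 2 * ι * ψ * ‖cosSinMoment u‖ ^ 2 := by
  have hcu : Continuous u := continuous_iff_continuousAt.2 fun x => (hu x).continuousAt
  have hc₁ : Continuous fun θ => ⟪u θ, u'' θ⟫_ℝ := by fun_prop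
  have hc₂ : Continuous fun θ => ⟪cosSinMoment u, (cos θ : ℂ) * (sin θ : ℂ) * u θ⟫_ℝ := by
    fun_prop
  calc ∫ θ in (0 : ℝ)..(2 * π), ⟪u θ, v θ⟫_ℝ
      = ∫ θ in (0 : ℝ)..(2 * π), (ν * ⟪u θ, u'' θ⟫_ℝ -
          2 * ι * ψ * ⟪cosSinMoment u, (cos θ : ℂ) * (sin θ : ℂ) * u θ⟫_ℝ) :=
        integral_congr fun θ _ => inner_eq_of_linearized_eq (heq θ)
    _ = ν * (∫ θ in (0 : ℝ)..(2 * π), ⟪u θ, u'' θ⟫_ℝ) -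
          2 * ι * ψ * ⟪cosSinMoment u, cosSinMoment u⟫_ℝ := by
        rw [integral_sub ((hc₁.const_mul _).intervalIntegrable _ _)
          ((hc₂.const_mul _).intervalIntegrable _ _), intervalIntegral.integral_const_mul,
          intervalIntegral.integral_const_mul,
          integral_inner_cosSinMoment hcu]
    _ = -ν * (∫ θ in (0 : ℝ)..(2 * π), ‖u' θ‖ ^ 2) - 2 * ι * ψ * ‖cosSinMoment u‖ ^ 2 := by
        rw [hper.integral_inner_eq_neg_integral_norm_sq_deriv hu hu' hu'',
          real_inner_self_eq_norm_sq]
        ring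

theorem statement10_general (ν ψ k ι : ℝ) (hν : 0 ≤ ν) (hψ : 0 ≤ ψ)
    (h dht dhθ dhθθ : ℝ → ℝ → ℂ)
    (hper : ∀ t, 0 ≤ t → Function.Periodic (fun θ => h θ t) (2 * π))
    (hcont : ContinuousOn (Function.uncurry h) {p : ℝ × ℝ | 0 ≤ p.2})
    (hcont_t : ContinuousOn (Function.uncurry dht) {p : ℝ × ℝ | 0 ≤ p.2})
    (hcont_θθ : ContinuousOn (Function.uncurry dhθθ) {p : ℝ × ℝ | 0 ≤ p.2})
    (hd_t : ∀ θ t, 0 ≤ t → HasDerivWithinAt (fun s => h θ s) (dht θ t) (Set.Ici 0) t)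
    (hd_θ : ∀ θ t, 0 ≤ t → HasDerivAt (fun φ => h φ t) (dhθ θ t) θ)
    (hd_θθ : ∀ θ t, 0 ≤ t → HasDerivAt (fun φ => dhθ φ t) (dhθθ θ t) θ)
    (hpde : ∀ θ t, 0 ≤ t →
      dht θ t + Complex.I * k * (Real.cos θ : ℂ) * h θ t +
          2 * (ι : ℂ) * (ψ : ℂ) * (Real.cos θ : ℂ) * (Real.sin θ : ℂ) *
            (∫ φ in (0 : ℝ)..(2 * π), (Real.cos φ : ℂ) * (Real.sin φ : ℂ) * h φ t) =
        (ν : ℂ) * dhθθ θ t) :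
    (∀ t, 0 < t →
        HasDerivAt (fun s => ∫ θ in (0 : ℝ)..(2 * π), ‖h θ s‖ ^ 2)
          (2 * (-ν * (∫ θ in (0 : ℝ)..(2 * π), ‖dhθ θ t‖ ^ 2) -
            2 * ι * ψ *
              ‖∫ φ in (0 : ℝ)..(2 * π), (Real.cos φ : ℂ) * (Real.sin φ : ℂ) * h φ t‖ ^ 2)) t) ∧
      (ι = 1 → ∀ s t, 0 ≤ s → s ≤ t →
        (∫ θ in (0 : ℝ)..(2 * π), ‖h θ t‖ ^ 2) ≤ ∫ θ in (0 : ℝ)..(2 * π), ‖h θ s‖ ^ 2) := by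
  have hderiv (t : ℝ) (ht : 0 < t) : HasDerivAt (fun s => ∫ θ in (0 : ℝ)..(2 * π), ‖h θ s‖ ^ 2)
      (2 * (-ν * (∫ θ in (0 : ℝ)..(2 * π), ‖dhθ θ t‖ ^ 2) -
        2 * ι * ψ * ‖cosSinMoment fun φ => h φ t‖ ^ 2)) t := by
    rw [← integral_inner_eq_of_linearized_eq (hper t ht.le) (fun θ => hd_θ θ t ht.le)
      (fun θ => hd_θθ θ t ht.le) (continuous_slice_of_nonneg_snd hcont_θθ ht.le)
      (fun θ => hpde θ t ht.le), ← intervalIntegral.integral_const_mul]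
    exact hasDerivAt_integral_norm_sq ht hcont hcont_t fun θ s hs =>
      (hd_t θ s hs.le).hasDerivAt (Ici_mem_nhds hs)
  refine ⟨hderiv, fun hι s t hs hst => ?_⟩
  subst hι
  have henergy : ContinuousOn (fun s => ∫ θ in (0 : ℝ)..(2 * π), ‖h θ s‖ ^ 2) (Ici 0) :=
    continuousOn_intervalIntegral_of_continuousOn_prod (F := fun s θ => ‖h θ s‖ ^ 2)
      ((continuous_pow 2).comp_continuousOn
        (continuousOn_uncurry_flip_of_nonneg_snd hcont).norm) _ _
  refine antitoneOn_of_hasDerivWithinAt_nonpos (convex_Ici 0) henergy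
    (fun x hx => (hderiv x (by simpa using hx)).hasDerivWithinAt) (fun x hx => ?_)
    hs (hs.trans hst) hst
  have hdiss : 0 ≤ ν * ∫ θ in (0 : ℝ)..(2 * π), ‖dhθ θ x‖ ^ 2 :=
    mul_nonneg hν (intervalIntegral.integral_nonneg two_pi_pos.le fun _ _ => sq_nonneg _)
  have hmoment : 0 ≤ ψ * ‖cosSinMoment fun φ => h φ x‖ ^ 2 := mul_nonneg hψ (sq_nonneg _)
  linarith

/-- Mode-by-mode linearized H-theorem in dimension `d = 2`:
for a classical, `2π`-periodic-in-`θ` solution of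
`∂_t h + i k cos θ · h + 2 ι ψ̄ cos θ sin θ · a(t) = ν ∂²_θ h`,
`a(t) = ∫₀^{2π} cos φ sin φ h(φ,t) dφ`, the `L²` norm satisfies
`(1/2) d/dt ‖h(·,t)‖² = −ν ∫ |∂_θ h|² − 2 ι ψ̄ |a(t)|²`; in particular for pullers
(`ι = +1`) the `L²` norm is nonincreasing. -/
theorem statement10 (ν ψ k ι : ℝ) (hν : 0 ≤ ν) (hψ : 0 ≤ ψ) (hk : 0 < k)
    (hι : ι = 1 ∨ ι = -1)
    (h dht dhθ dhθθ : ℝ → ℝ → ℂ)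
    (hper : ∀ t, 0 ≤ t → Function.Periodic (fun θ => h θ t) (2 * π))
    (hcont : ContinuousOn (Function.uncurry h) {p : ℝ × ℝ | 0 ≤ p.2})
    (hcont_t : ContinuousOn (Function.uncurry dht) {p : ℝ × ℝ | 0 ≤ p.2})
    (hcont_θ : ContinuousOn (Function.uncurry dhθ) {p : ℝ × ℝ | 0 ≤ p.2})
    (hcont_θθ : ContinuousOn (Function.uncurry dhθθ) {p : ℝ × ℝ | 0 ≤ p.2})
    (hd_t : ∀ θ t, 0 ≤ t → HasDerivWithinAt (fun s => h θ s) (dht θ t) (Set.Ici 0) t)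
    (hd_θ : ∀ θ t, 0 ≤ t → HasDerivAt (fun φ => h φ t) (dhθ θ t) θ)
    (hd_θθ : ∀ θ t, 0 ≤ t → HasDerivAt (fun φ => dhθ φ t) (dhθθ θ t) θ)
    (hpde : ∀ θ t, 0 ≤ t →
      dht θ t + Complex.I * k * (Real.cos θ : ℂ) * h θ t +
          2 * (ι : ℂ) * (ψ : ℂ) * (Real.cos θ : ℂ) * (Real.sin θ : ℂ) *
            (∫ φ in (0 : ℝ)..(2 * π), (Real.cos φ : ℂ) * (Real.sin φ : ℂ) * h φ t) =
        (ν : ℂ) * dhθθ θ t) :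
    (∀ t, 0 < t →
        HasDerivAt (fun s => ∫ θ in (0 : ℝ)..(2 * π), ‖h θ s‖ ^ 2)
          (2 * (-ν * (∫ θ in (0 : ℝ)..(2 * π), ‖dhθ θ t‖ ^ 2) -
            2 * ι * ψ *
              ‖∫ φ in (0 : ℝ)..(2 * π), (Real.cos φ : ℂ) * (Real.sin φ : ℂ) * h φ t‖ ^ 2)) t) ∧
      (ι = 1 → ∀ s t, 0 ≤ s → s ≤ t →
        (∫ θ in (0 : ℝ)..(2 * π), ‖h θ t‖ ^ 2) ≤ ∫ θ in (0 : ℝ)..(2 * π), ‖h θ s‖ ^ 2) :=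
  statement10_general ν ψ k ι hν hψ h dht dhθ dhθθ hper hcont hcont_t hcont_θθ hd_t hd_θ hd_θθ hpde
end

section
/- There exists a constant C > 0 such that for every 2π-periodic continuously differentiable function h : ℝ → ℂ and every δ ∈ (0, 1/2), one has ∫₀^{2π} |h(θ)|² dθ ≤ C ( δ^{−1} ∫₀^{2π} sin²θ |h(θ)|² dθ + δ ∫₀^{2π} |h′(θ)|² dθ ). -/
/-!
Since `cos 2θ = 1 - 2 sin² θ`, we have `‖h‖² = 2 sin² θ ‖h‖² + cos 2θ ‖h‖²`. Integrating the last
term by parts against `(sin 2θ) / 2`, which vanishes at `0` and `2π`, turns it into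
`-∫ sin 2θ ⟪h, h'⟫`, and pointwise
`|sin 2θ ⟪h, h'⟫| ≤ 2 |sin θ| ‖h‖ ‖h'‖ ≤ δ⁻¹ sin² θ ‖h‖² + δ ‖h'‖²`.
As `δ⁻¹ ≥ 2`, the constant `C = 2` works.
-/

open Real MeasureTheory intervalIntegral

variable {E : Type*} [NormedAddCommGroup E] [InnerProductSpace ℝ E]

theorem integral_norm_sq_mul_cos_two_mul {h : ℝ → E} (hh : ContDiff ℝ 1 h) :
    ∫ θ in 0..2 * π, ‖h θ‖ ^ 2 * cos (2 * θ) =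
      -∫ θ in 0..2 * π, sin (2 * θ) * inner ℝ (h θ) (deriv h θ) := by
  have hnorm : ∀ x, HasDerivAt (fun θ ↦ ‖h θ‖ ^ 2) (2 * inner ℝ (h x) (deriv h x)) x :=
    fun x ↦ ((hh.differentiable one_ne_zero) x).hasDerivAt.norm_sq
  have hsin : ∀ x, HasDerivAt (fun θ ↦ sin (2 * θ) / 2) (cos (2 * x)) x := fun x ↦ by
    simpa using (((hasDerivAt_id x).const_mul 2).sin).div_const 2
  have hc : Continuous h := hh.continuous
  have hc' : Continuous (deriv h) := hh.continuous_deriv le_rfl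
  rw [integral_mul_deriv_eq_deriv_mul (fun x _ ↦ hnorm x) (fun x _ ↦ hsin x)
    ((by fun_prop : Continuous _).intervalIntegrable _ _)
    ((by fun_prop : Continuous _).intervalIntegrable _ _)]
  have hsin_four_pi : sin (2 * (2 * π)) = 0 := by
    rw [← mul_assoc, show (2 : ℝ) * 2 = (4 : ℕ) by norm_num, sin_nat_mul_pi]
  simp only [hsin_four_pi, mul_zero, zero_div, sin_zero, sub_zero, zero_sub]
  congr 1
  refine integral_congr fun x _ ↦ ?_
  ring

theorem two_mul_le_inv_mul_sq_add_mul_sq {δ : ℝ} (hδ : 0 < δ) (a b : ℝ) :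
    2 * a * b ≤ δ⁻¹ * a ^ 2 + δ * b ^ 2 := by
  have hsq : δ⁻¹ * a ^ 2 + δ * b ^ 2 - 2 * a * b = δ⁻¹ * (a - δ * b) ^ 2 := by
    field_simp; ring
  rw [← sub_nonneg, hsq]
  positivity

theorem neg_sin_two_mul_mul_inner_le {δ : ℝ} (hδ : 0 < δ) (θ : ℝ) (x y : E) :
    -(sin (2 * θ) * inner ℝ x y) ≤ δ⁻¹ * (sin θ ^ 2 * ‖x‖ ^ 2) + δ * ‖y‖ ^ 2 := by
  have hsin : |sin (2 * θ)| ≤ 2 * |sin θ| := by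
    rw [sin_two_mul, abs_mul, abs_mul, abs_two]
    exact mul_le_of_le_one_right (by positivity) (abs_cos_le_one θ)
  calc -(sin (2 * θ) * inner ℝ x y) ≤ |sin (2 * θ)| * |inner ℝ x y| := by
        rw [← abs_mul]; exact neg_le_abs _
    _ ≤ 2 * |sin θ| * (‖x‖ * ‖y‖) :=
        mul_le_mul hsin (abs_real_inner_le_norm x y) (abs_nonneg _) (by positivity)
    _ = 2 * (|sin θ| * ‖x‖) * ‖y‖ := by ring
    _ ≤ δ⁻¹ * (|sin θ| * ‖x‖) ^ 2 + δ * ‖y‖ ^ 2 := two_mul_le_inv_mul_sq_add_mul_sq hδ _ _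
    _ = δ⁻¹ * (sin θ ^ 2 * ‖x‖ ^ 2) + δ * ‖y‖ ^ 2 := by rw [mul_pow, sq_abs]

theorem integral_norm_sq_le {h : ℝ → E} (hh : ContDiff ℝ 1 h) {δ : ℝ} (hδ : 0 < δ) :
    ∫ θ in 0..2 * π, ‖h θ‖ ^ 2 ≤
      (2 + δ⁻¹) * (∫ θ in 0..2 * π, sin θ ^ 2 * ‖h θ‖ ^ 2) +
        δ * ∫ θ in 0..2 * π, ‖deriv h θ‖ ^ 2 := by
  have hc : Continuous h := hh.continuous
  have hc' : Continuous (deriv h) := hh.continuous_deriv le_rfl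
  have hsplit : ∫ θ in 0..2 * π, ‖h θ‖ ^ 2 =
      2 * (∫ θ in 0..2 * π, sin θ ^ 2 * ‖h θ‖ ^ 2) +
        ∫ θ in 0..2 * π, ‖h θ‖ ^ 2 * cos (2 * θ) := by
    rw [← intervalIntegral.integral_const_mul,
      ← intervalIntegral.integral_add ((by fun_prop : Continuous _).intervalIntegrable _ _)
        ((by fun_prop : Continuous _).intervalIntegrable _ _)]
    refine integral_congr fun θ _ ↦ ?_
    simp only [cos_two_mul_eq_one_sub]
    ring
  have hcross : -∫ θ in 0..2 * π, sin (2 * θ) * inner ℝ (h θ) (deriv h θ) ≤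
      δ⁻¹ * (∫ θ in 0..2 * π, sin θ ^ 2 * ‖h θ‖ ^ 2) +
        δ * ∫ θ in 0..2 * π, ‖deriv h θ‖ ^ 2 := by
    rw [← intervalIntegral.integral_neg, ← intervalIntegral.integral_const_mul,
      ← intervalIntegral.integral_const_mul,
      ← intervalIntegral.integral_add ((by fun_prop : Continuous _).intervalIntegrable _ _)
        ((by fun_prop : Continuous _).intervalIntegrable _ _)]
    exact integral_mono_on (by positivity) ((by fun_prop : Continuous _).intervalIntegrable _ _)
        ((by fun_prop : Continuous _).intervalIntegrable _ _)
      fun θ _ ↦ neg_sin_two_mul_mul_inner_le hδ θ (h θ) (deriv h θ)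
  rw [hsplit, integral_norm_sq_mul_cos_two_mul hh]
  linarith

/-- Poincaré-type inequality on the unit circle: there is `C > 0`
such that for every `2π`-periodic `C¹` function `h : ℝ → ℂ` and every `δ ∈ (0, 1/2)`,
`∫₀^{2π} |h|² ≤ C (δ⁻¹ ∫₀^{2π} sin²θ |h|² + δ ∫₀^{2π} |h'|²)`. -/
theorem statement18 :
    ∃ C : ℝ, 0 < C ∧
      ∀ h : ℝ → ℂ, Function.Periodic h (2 * π) → ContDiff ℝ 1 h →
      ∀ δ : ℝ, 0 < δ → δ < 1 / 2 →
        (∫ θ in (0 : ℝ)..(2 * π), ‖h θ‖ ^ 2) ≤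
          C * (δ⁻¹ * (∫ θ in (0 : ℝ)..(2 * π), Real.sin θ ^ 2 * ‖h θ‖ ^ 2) +
            δ * ∫ θ in (0 : ℝ)..(2 * π), ‖deriv h θ‖ ^ 2) := by
  refine ⟨2, two_pos, fun h _ hh δ hδ hδ_lt ↦ ?_⟩
  have hA : 0 ≤ ∫ θ in 0..2 * π, sin θ ^ 2 * ‖h θ‖ ^ 2 :=
    integral_nonneg two_pi_pos.le fun _ _ ↦ by positivity
  have hB : 0 ≤ ∫ θ in 0..2 * π, ‖deriv h θ‖ ^ 2 :=
    integral_nonneg two_pi_pos.le fun _ _ ↦ by positivity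
  have hδ_inv : 2 ≤ δ⁻¹ := by
    rw [le_inv_comm₀ two_pos hδ]; linarith
  calc ∫ θ in 0..2 * π, ‖h θ‖ ^ 2
      ≤ (2 + δ⁻¹) * (∫ θ in 0..2 * π, sin θ ^ 2 * ‖h θ‖ ^ 2) +
          δ * ∫ θ in 0..2 * π, ‖deriv h θ‖ ^ 2 := integral_norm_sq_le hh hδ
    _ ≤ 2 * (δ⁻¹ * (∫ θ in 0..2 * π, sin θ ^ 2 * ‖h θ‖ ^ 2) +
          δ * ∫ θ in 0..2 * π, ‖deriv h θ‖ ^ 2) := by nlinarith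
end
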